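/- arXiv:1608.07723 — 8 statements merged into one kernel-verified Lean document; each statement's English description precedes it below -/
import Mathlib

section
/- Let G be a graph and for each vertex v let χ_v be a positive integer such that the chromatic number of the complement of the induced subgraph of G on the neighborhood N_G(v) is at least χ_v. Then the minimum number of cliques needed to cover all edges of G is at least ⌈(∑_{v∈V(G)} χ_v)/ω(G)⌉, where ω(G) is the clique number of G. -/
open SimpleGraph

/-- A finite collection of cliques of `G` covering every edge of `G`. -/
def IsEdgeCliqueCover {V : Type*} (G : SimpleGraph V) (𝒞 : Finset (Set V)) : Prop :=
  (∀ C ∈ 𝒞, G.IsClique C) ∧ ∀ ⦃u v : V⦄, G.Adj u v → ∃ C ∈ 𝒞, u ∈ C ∧ v ∈ C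

/-- The (edge) clique cover number of `G`: the least size of an edge clique covering. -/
noncomputable def edgeCliqueCoverNumber {V : Type*} (G : SimpleGraph V) : ℕ :=
  sInf {k | ∃ 𝒞 : Finset (Set V), IsEdgeCliqueCover G 𝒞 ∧ 𝒞.card = k}

/-- The clique number of `G`: the size of the largest clique. -/
noncomputable def cliqueNum' {V : Type*} (G : SimpleGraph V) : ℕ :=
  sSup {n | ∃ s : Finset V, G.IsNClique n s}

lemma exists_cover {V : Type*} [Fintype V] (G : SimpleGraph V) :
    ∃ 𝒞 : Finset (Set V), IsEdgeCliqueCover G 𝒞 := by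
  classical
  refine ⟨(Finset.univ.filter fun p : V × V => G.Adj p.1 p.2).image
    (fun p => ({p.1, p.2} : Set V)), ?_, ?_⟩
  · intro C hC
    simp only [Finset.mem_image, Finset.mem_filter, Finset.mem_univ, true_and] at hC
    obtain ⟨p, hp, rfl⟩ := hC
    intro x hx y hy hxy
    rcases hx with rfl | rfl <;> rcases hy with rfl | rfl
    · exact absurd rfl hxy
    · exact hp
    · exact hp.symm
    · exact absurd rfl hxy
  · intro u v h
    refine ⟨{u, v}, ?_, by simp, by simp⟩
    simp only [Finset.mem_image, Finset.mem_filter, Finset.mem_univ, true_and]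
    exact ⟨(u, v), h, rfl⟩

/-- If `χ v` is a positive lower bound for the chromatic number of the complement of the
induced subgraph of `G` on the neighbourhood of `v`, for every vertex `v`, then
`cc(G) ≥ ⌈(∑ χ v) / ω(G)⌉`. -/
theorem stmt_0 {V : Type*} [Fintype V] (G : SimpleGraph V) (χ : V → ℕ)
    (hχpos : ∀ v : V, 1 ≤ χ v)
    (hχ : ∀ v : V, (χ v : ℕ∞) ≤ ((G.induce (G.neighborSet v))ᶜ).chromaticNumber) :
    ⌈(∑ v : V, (χ v : ℚ)) / (cliqueNum' G : ℚ)⌉₊ ≤ edgeCliqueCoverNumber G := by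
  classical
  obtain ⟨𝒞₀, h𝒞₀⟩ := exists_cover G
  refine le_csInf ⟨𝒞₀.card, 𝒞₀, h𝒞₀, rfl⟩ ?_
  rintro k ⟨𝒞, ⟨hclique, hcover⟩, rfl⟩
  -- the clique number bounds: ω ≥ 1 (if V nonempty) and every clique has ≤ ω vertices
  have hbdd : BddAbove {n | ∃ s : Finset V, G.IsNClique n s} := by
    refine ⟨Fintype.card V, fun n hn => ?_⟩
    obtain ⟨s, hs⟩ := hn
    rw [← hs.2]
    exact Finset.card_le_univ s
  set ω := cliqueNum' G with hω
  -- Step 1: per-vertex bound χ v ≤ #{C ∈ 𝒞 : v ∈ C}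
  have hvert : ∀ v : V, χ v ≤ (𝒞.filter fun C => v ∈ C).card := by
    intro v
    set H := (G.induce (G.neighborSet v))ᶜ with hH
    have hc : ∀ u : G.neighborSet v, ∃ C, C ∈ 𝒞 ∧ v ∈ C ∧ (u : V) ∈ C := by
      intro u
      obtain ⟨C, hC, hv, hu⟩ := hcover u.2
      exact ⟨C, hC, hv, hu⟩
    let col : H.Coloring {C : Set V // C ∈ 𝒞.filter fun C => v ∈ C} := by
      refine Coloring.mk (fun u => ⟨(hc u).choose, ?_⟩) ?_
      · simp only [Finset.mem_filter]
        exact ⟨(hc u).choose_spec.1, (hc u).choose_spec.2.1⟩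
      · intro u w hadj heq
        rw [compl_adj] at hadj
        have h1 := (hc u).choose_spec.2.2
        have h2 := (hc w).choose_spec.2.2
        have hC := hclique _ (hc u).choose_spec.1
        have huw : (u : V) ≠ (w : V) := fun h => hadj.1 (Subtype.ext h)
        have hset : (hc u).choose = (hc w).choose := congrArg Subtype.val heq
        rw [← hset] at h2
        exact hadj.2 (hC h1 h2 huw)
    have := (col.colorable).chromaticNumber_le
    have h2 := le_trans (hχ v) this
    rw [Fintype.card_coe] at h2
    exact_mod_cast h2
  -- Step 2: double count
  have hsum : ∑ v : V, χ v ≤ 𝒞.card * ω := by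
    calc ∑ v : V, χ v ≤ ∑ v : V, (𝒞.filter fun C => v ∈ C).card :=
          Finset.sum_le_sum fun v _ => hvert v
      _ = ∑ v : V, ∑ C ∈ 𝒞, if v ∈ C then 1 else 0 := by
          simp only [Finset.card_filter]
      _ = ∑ C ∈ 𝒞, ∑ v : V, if v ∈ C then 1 else 0 := Finset.sum_comm
      _ = ∑ C ∈ 𝒞, (Finset.univ.filter fun v => v ∈ C).card := by
          simp only [Finset.card_filter]
      _ ≤ ∑ C ∈ 𝒞, ω := by
          refine Finset.sum_le_sum fun C hC => ?_
          refine le_csSup hbdd ⟨Finset.univ.filter fun v => v ∈ C, ?_⟩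
          rw [isNClique_iff]
          refine ⟨?_, rfl⟩
          intro x hx y hy hxy
          simp only [Finset.coe_filter, Set.mem_setOf_eq] at hx hy
          exact hclique C hC hx.2 hy.2 hxy
      _ = 𝒞.card * ω := by rw [Finset.sum_const, smul_eq_mul]
  -- Step 3: conclude
  rcases isEmpty_or_nonempty V with hV | hV
  · simp
  · have hω1 : 1 ≤ ω := by
      obtain ⟨v⟩ := hV
      refine le_csSup hbdd ⟨{v}, ?_⟩
      rw [isNClique_iff]
      exact ⟨by simp [IsClique], by simp⟩
    rw [Nat.ceil_le, div_le_iff₀ (by exact_mod_cast hω1)]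
    push_cast
    exact_mod_cast hsum
end

section
/- Let p and n be positive integers with n ≥ 3p+1. Then the clique cover number of the p-th power of the cycle C_n equals n. -/
open SimpleGraph

/-- The `p`-th power of the cycle `C_n`: vertices are `ZMod n`, and `u` is adjacent to `v`
iff `u - v` or `v - u` (mod `n`) lies in `{1, …, p}`. -/
def cyclePower (n p : ℕ) : SimpleGraph (ZMod n) where
  Adj u v := u ≠ v ∧ ∃ k : ℕ, 1 ≤ k ∧ k ≤ p ∧ (u - v = (k : ZMod n) ∨ v - u = (k : ZMod n))
  symm := by
    constructor
    rintro u v ⟨hne, k, hk1, hk2, hk⟩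
    exact ⟨hne.symm, k, hk1, hk2, hk.symm⟩
  loopless := by
    constructor
    rintro u ⟨hne, -⟩
    exact hne rfl

/-
The arcs `{i, i + 1, …, i + p}` are `n` cliques covering every edge, so `cc ≤ n`. Conversely,
when `n > 3p` a clique containing the edge `{i, i + p}` must lie inside the arc starting at `i`,
and that arc contains no other edge of the form `{j, j + p}`; so the `n` edges `{i, i + p}` need
`n` distinct cliques.
-/

lemma edgeCliqueCoverNumber_le {V : Type*} {G : SimpleGraph V} {𝒞 : Finset (Set V)}
    (h : IsEdgeCliqueCover G 𝒞) : edgeCliqueCoverNumber G ≤ 𝒞.card :=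
  Nat.sInf_le ⟨𝒞, h, rfl⟩

lemma le_edgeCliqueCoverNumber {V : Type*} {G : SimpleGraph V} {k : ℕ}
    (hne : ∃ 𝒞, IsEdgeCliqueCover G 𝒞) (h : ∀ 𝒞, IsEdgeCliqueCover G 𝒞 → k ≤ 𝒞.card) :
    k ≤ edgeCliqueCoverNumber G := by
  obtain ⟨𝒞, h𝒞⟩ := hne
  refine le_csInf ⟨_, 𝒞, h𝒞, rfl⟩ ?_
  rintro _ ⟨𝒟, h𝒟, rfl⟩
  exact h 𝒟 h𝒟

namespace CyclePower

variable {n p : ℕ}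

variable (p) in
/-- The arc `{i, i + 1, …, i + p}` of the cycle. -/
def arc (i : ZMod n) : Set (ZMod n) := {x | (x - i).val ≤ p}

lemma eq_of_mem_arc_of_add_mem_arc (h2p : 2 * p < n) {i j : ZMod n}
    (hj : j ∈ arc p i) (hjp : j + p ∈ arc p i) : j = i := by
  simp only [arc, Set.mem_ofPred_eq] at hj hjp
  rw [add_sub_right_comm, ZMod.val_add_of_lt, ZMod.val_cast_of_lt (by omega)] at hjp
  · exact sub_eq_zero.mp ((ZMod.val_eq_zero _).mp (by omega))
  · rw [ZMod.val_cast_of_lt (by omega)]; omega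

variable [NeZero n]

lemma adj_iff {u v : ZMod n} :
    (cyclePower n p).Adj u v ↔ u ≠ v ∧ ((u - v).val ≤ p ∨ (v - u).val ≤ p) := by
  have val_natCast_le (k : ℕ) : (k : ZMod n).val ≤ k := by
    rw [ZMod.val_natCast]; exact Nat.mod_le k n
  constructor
  · rintro ⟨hne, k, -, hkp, hk | hk⟩
    · exact ⟨hne, .inl (hk ▸ (val_natCast_le k).trans hkp)⟩
    · exact ⟨hne, .inr (hk ▸ (val_natCast_le k).trans hkp)⟩
  · rintro ⟨hne, h | h⟩
    · exact ⟨hne, _, ZMod.val_pos.mpr (sub_ne_zero.mpr hne), h, .inl (ZMod.natCast_zmod_val _).symm⟩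
    · exact ⟨hne, _, ZMod.val_pos.mpr (sub_ne_zero.mpr hne.symm), h,
        .inr (ZMod.natCast_zmod_val _).symm⟩

lemma isClique_arc (i : ZMod n) : (cyclePower n p).IsClique (arc p i) := by
  intro x hx y hy hne
  rw [adj_iff]
  refine ⟨hne, ?_⟩
  have hxy : x - y = (x - i) - (y - i) := by ring
  have hyx : y - x = (y - i) - (x - i) := by ring
  rcases le_total (y - i).val (x - i).val with h | h
  · left; rw [hxy, ZMod.val_sub h]; exact (Nat.sub_le _ _).trans hx
  · right; rw [hyx, ZMod.val_sub h]; exact (Nat.sub_le _ _).trans hy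

lemma exists_arc_of_adj {u v : ZMod n} (h : (cyclePower n p).Adj u v) :
    ∃ i, u ∈ arc p i ∧ v ∈ arc p i := by
  rcases (adj_iff.mp h).2 with h | h
  · exact ⟨v, h, by simp [arc]⟩
  · exact ⟨u, by simp [arc], h⟩

lemma isEdgeCliqueCover_arcs :
    IsEdgeCliqueCover (cyclePower n p) (Finset.univ.image (arc p)) := by
  refine ⟨?_, fun u v h => ?_⟩
  · simp only [Finset.mem_image, Finset.mem_univ, true_and]
    rintro _ ⟨i, rfl⟩
    exact isClique_arc i
  · obtain ⟨i, hu, hv⟩ := exists_arc_of_adj h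
    exact ⟨arc p i, Finset.mem_image_of_mem _ (Finset.mem_univ i), hu, hv⟩

lemma edgeCliqueCoverNumber_le_self : edgeCliqueCoverNumber (cyclePower n p) ≤ n :=
  (edgeCliqueCoverNumber_le isEdgeCliqueCover_arcs).trans <| by
    simpa [ZMod.card] using Finset.card_image_le (s := Finset.univ) (f := arc p)

lemma adj_add_self (hp : 1 ≤ p) (hpn : p < n) (i : ZMod n) :
    (cyclePower n p).Adj i (i + p) := by
  rw [adj_iff, add_sub_cancel_left, ZMod.val_cast_of_lt hpn]
  refine ⟨fun h => ?_, .inr le_rfl⟩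
  have h0 : ((p : ℕ) : ZMod n) = 0 := by simpa using congrArg (· - i) h.symm
  rw [← ZMod.val_eq_zero, ZMod.val_cast_of_lt hpn] at h0
  omega

/-- A point within cyclic distance `p` of both `0` and `p` lies on the short arc between them,
because the long arc has length `n - p > 2p`. -/
lemma val_le_of_near_zero_of_near (h3p : 3 * p < n) {d : ZMod n}
    (h₀ : d.val ≤ p ∨ (-d).val ≤ p) (hₚ : (d - p).val ≤ p ∨ (p - d).val ≤ p) :
    d.val ≤ p := by
  by_contra! hd
  have hpn : p < n := by omega
  have hd0 : d ≠ 0 := fun h => by simp [h] at hd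
  have hp_le : ((p : ℕ) : ZMod n).val ≤ d.val := by rw [ZMod.val_cast_of_lt hpn]; omega
  have hdp0 : d - p ≠ 0 := fun h => by
    rw [sub_eq_zero] at h; rw [h, ZMod.val_cast_of_lt hpn] at hd; omega
  have hneg : (-d).val = n - d.val := by rw [ZMod.neg_val, if_neg hd0]
  have hsub : (d - p).val = d.val - p := by rw [ZMod.val_sub hp_le, ZMod.val_cast_of_lt hpn]
  have hsub' : ((p : ZMod n) - d).val = n - (d.val - p) := by
    rw [← neg_sub, ZMod.neg_val, if_neg hdp0, hsub]
  have := d.val_lt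
  omega

lemma IsClique.subset_arc (h3p : 3 * p < n) {C : Set (ZMod n)} (hC : (cyclePower n p).IsClique C)
    {i : ZMod n} (hi : i ∈ C) (hip : i + p ∈ C) : C ⊆ arc p i := by
  intro x hx
  by_cases hxi : x = i
  · simp [arc, hxi]
  by_cases hxip : x = i + p
  · simp only [arc, Set.mem_ofPred_eq, hxip, add_sub_cancel_left]
    rw [ZMod.val_cast_of_lt (by omega)]
  have h₀ := (adj_iff.mp (hC hx hi hxi)).2
  have hₚ := (adj_iff.mp (hC hx hip hxip)).2
  rw [← neg_sub x i] at h₀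
  rw [sub_add_eq_sub_sub, show i + p - x = p - (x - i) by ring] at hₚ
  exact val_le_of_near_zero_of_near h3p h₀ hₚ

lemma le_card_of_isEdgeCliqueCover (hp : 1 ≤ p) (h3p : 3 * p < n) {𝒞 : Finset (Set (ZMod n))}
    (h𝒞 : IsEdgeCliqueCover (cyclePower n p) 𝒞) : n ≤ 𝒞.card := by
  choose f hf𝒞 hfi hfip using fun i : ZMod n => h𝒞.2 (adj_add_self hp (by omega) i)
  have hf : Function.Injective f := fun i j hij => by
    have hsub := IsClique.subset_arc h3p (h𝒞.1 _ (hf𝒞 i)) (hfi i) (hfip i)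
    rw [hij] at hsub
    exact (eq_of_mem_arc_of_add_mem_arc (by omega) (hsub (hfi j)) (hsub (hfip j))).symm
  calc n = (Finset.univ : Finset (ZMod n)).card := by rw [Finset.card_univ, ZMod.card]
    _ ≤ 𝒞.card := Finset.card_le_card_of_injOn f (fun i _ => hf𝒞 i) hf.injOn

end CyclePower

open CyclePower in
/-- For positive integers `p, n` with `n ≥ 3p + 1`, the clique cover number of the `p`-th power
of the cycle `C_n` equals `n`. -/
theorem stmt_1 (p n : ℕ) (hp : 1 ≤ p) (hn : 3 * p + 1 ≤ n) :
    edgeCliqueCoverNumber (cyclePower n p) = n := by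
  have : NeZero n := ⟨by omega⟩
  exact le_antisymm edgeCliqueCoverNumber_le_self
    (le_edgeCliqueCoverNumber ⟨_, isEdgeCliqueCover_arcs⟩
      fun _ => le_card_of_isEdgeCliqueCover hp (by omega))
end

section
/- If G is the complement of a twister (a specific 10-vertex graph), then the clique cover number of G equals 10. -/
open SimpleGraph

/-- The ten triangles of the complement of a twister, on vertices `u_1 = 0`, `u_2 = 1`,
`v_i = i + 1` for `1 ≤ i ≤ 8`:
`{u_2,v_1,v_7}, {u_2,v_3,v_5}, {u_1,v_4,v_6}, {u_1,v_2,v_8}, {v_1,v_3,v_6}, {v_2,v_5,v_7},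
{v_3,v_6,v_8}, {v_3,v_5,v_8}, {v_1,v_4,v_7}, {v_2,v_4,v_7}`. -/
def twisterComplementCliques : List (Finset (Fin 10)) :=
  [{1, 2, 8}, {1, 4, 6}, {0, 5, 7}, {0, 3, 9}, {2, 4, 7},
   {3, 6, 8}, {4, 7, 9}, {4, 6, 9}, {2, 5, 8}, {3, 5, 8}]

/-- The complement of a twister: the 10-vertex graph whose edges are exactly the pairs lying
in one of the ten listed triangles. -/
def twisterComplement : SimpleGraph (Fin 10) :=
  SimpleGraph.fromRel (fun u v => ∃ C ∈ twisterComplementCliques, u ∈ C ∧ v ∈ C)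

/-!
Every clique of the complement of a twister has at most three vertices, so a clique through a
vertex `v` covers at most two of the edges at `v`. The vertices `u_1, u_2` have degree `4` and
the eight vertices `v_i` have degree `5`, so in an edge clique cover each `u_i` lies in at least
two cliques and each `v_i` in at least three. Counting incidences, `3 |𝒞| ≥ ∑_{C ∈ 𝒞} |C| ≥
2 · 2 + 8 · 3 = 28`, hence `|𝒞| ≥ 10`, and the ten listed triangles attain this bound.
-/

open Finset

theorem SimpleGraph.IsClique.card_le_of_cliqueFree {V : Type*} {G : SimpleGraph V} {k : ℕ}
    {s : Finset V} (hs : G.IsClique (s : Set V)) (hG : G.CliqueFree (k + 1)) : #s ≤ k := by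
  by_contra! hk
  obtain ⟨t, hts, ht⟩ := exists_subset_card_eq hk
  exact hG t ⟨hs.subset (by simpa using hts), ht⟩

section EdgeCliqueCover

variable {V : Type*} {G : SimpleGraph V} {𝒞 : Finset (Set V)}

theorem IsEdgeCliqueCover.edgeCliqueCoverNumber_le (h : IsEdgeCliqueCover G 𝒞) :
    edgeCliqueCoverNumber G ≤ #𝒞 :=
  Nat.sInf_le ⟨𝒞, h, rfl⟩

theorem IsEdgeCliqueCover.exists_card_eq_edgeCliqueCoverNumber (h : IsEdgeCliqueCover G 𝒞) :
    ∃ 𝒟, IsEdgeCliqueCover G 𝒟 ∧ #𝒟 = edgeCliqueCoverNumber G :=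
  Nat.sInf_mem (s := {k | ∃ 𝒟, IsEdgeCliqueCover G 𝒟 ∧ #𝒟 = k}) ⟨#𝒞, 𝒞, h, rfl⟩

theorem isEdgeCliqueCover_fromRel [DecidableEq V] (L : List (Finset V)) :
    IsEdgeCliqueCover (fromRel fun u v ↦ ∃ C ∈ L, u ∈ C ∧ v ∈ C)
      (L.toFinset.image ((↑) : Finset V → Set V)) := by
  refine ⟨?_, fun u v huv ↦ ?_⟩
  · simp only [mem_image, List.mem_toFinset]
    rintro _ ⟨C, hC, rfl⟩ u hu v hv huv
    exact (fromRel_adj _ u v).2 ⟨huv, .inl ⟨C, hC, hu, hv⟩⟩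
  · obtain ⟨-, ⟨C, hC, hu, hv⟩ | ⟨C, hC, hv, hu⟩⟩ := (fromRel_adj _ u v).1 huv <;>
      exact ⟨C, mem_image_of_mem _ (List.mem_toFinset.2 hC), hu, hv⟩

variable [Fintype V] {k : ℕ}

open Classical in
theorem IsEdgeCliqueCover.degree_le_mul_card_filter_mem [DecidableRel G.Adj]
    (h : IsEdgeCliqueCover G 𝒞) (hG : G.CliqueFree (k + 2)) (v : V) :
    G.degree v ≤ k * #{C ∈ 𝒞 | v ∈ C} := by
  have hcover : G.neighborFinset v ⊆ {C ∈ 𝒞 | v ∈ C}.biUnion fun C ↦ C.toFinset.erase v := by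
    intro w hw
    rw [mem_neighborFinset] at hw
    obtain ⟨C, hC, hvC, hwC⟩ := h.2 hw
    exact mem_biUnion.2 ⟨C, mem_filter.2 ⟨hC, hvC⟩, mem_erase.2 ⟨hw.ne', by simpa using hwC⟩⟩
  have hsmall : ∀ C ∈ {C ∈ 𝒞 | v ∈ C}, #(C.toFinset.erase v) ≤ k := by
    intro C hC
    obtain ⟨hC, hvC⟩ := mem_filter.1 hC
    have := IsClique.card_le_of_cliqueFree (s := C.toFinset) (by simpa using h.1 C hC) hG
    rw [card_erase_of_mem (by simpa using hvC)]
    omega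
  rw [← card_neighborFinset_eq_degree, mul_comm]
  exact (card_le_card hcover).trans (card_biUnion_le_card_mul _ _ _ hsmall)

open Classical in
theorem IsEdgeCliqueCover.sum_card_filter_mem_le (h : IsEdgeCliqueCover G 𝒞)
    (hG : G.CliqueFree (k + 1)) : ∑ v, #{C ∈ 𝒞 | v ∈ C} ≤ k * #𝒞 := by
  calc ∑ v, #{C ∈ 𝒞 | v ∈ C} = ∑ C ∈ 𝒞, #{v | v ∈ C} :=
        sum_card_bipartiteAbove_eq_sum_card_bipartiteBelow (fun v (C : Set V) ↦ v ∈ C)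
    _ ≤ ∑ _C ∈ 𝒞, k :=
        sum_le_sum fun C hC ↦ IsClique.card_le_of_cliqueFree (by simpa using h.1 C hC) hG
    _ = k * #𝒞 := by rw [sum_const, smul_eq_mul, mul_comm]

theorem IsEdgeCliqueCover.sum_degree_ceilDiv_le [DecidableRel G.Adj]
    (h : IsEdgeCliqueCover G 𝒞) (hG : G.CliqueFree (k + 2)) :
    ∑ v, G.degree v ⌈/⌉ k ≤ (k + 1) * #𝒞 := by
  classical
  rcases k.eq_zero_or_pos with rfl | hk
  · simp
  calc ∑ v, G.degree v ⌈/⌉ k ≤ ∑ v, #{C ∈ 𝒞 | v ∈ C} :=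
        sum_le_sum fun v _ ↦
          (ceilDiv_le_iff_le_mul hk).2 (h.degree_le_mul_card_filter_mem hG v)
    _ ≤ (k + 1) * #𝒞 := h.sum_card_filter_mem_le hG

end EdgeCliqueCover

instance : DecidableRel twisterComplement.Adj :=
  inferInstanceAs (DecidableRel (fromRel _).Adj)

theorem twisterComplement_cliqueFree_four : twisterComplement.CliqueFree 4 := by
  have hK4 : ∀ a b c d : Fin 10, twisterComplement.Adj a b → twisterComplement.Adj a c →
      twisterComplement.Adj a d → twisterComplement.Adj b c → twisterComplement.Adj b d →
      twisterComplement.Adj c d → False := by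
    decide
  by_contra hK
  let f := topEmbeddingOfNotCliqueFree hK
  exact hK4 (f 0) (f 1) (f 2) (f 3) (f.map_adj_iff.2 (by decide)) (f.map_adj_iff.2 (by decide))
    (f.map_adj_iff.2 (by decide)) (f.map_adj_iff.2 (by decide)) (f.map_adj_iff.2 (by decide))
    (f.map_adj_iff.2 (by decide))

theorem sum_degree_twisterComplement_ceilDiv_two :
    ∑ v, twisterComplement.degree v ⌈/⌉ 2 = 28 := by
  decide

/-- The clique cover number of the complement of a twister equals `10`. -/
theorem stmt_5 : edgeCliqueCoverNumber twisterComplement = 10 := by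
  have hcover : IsEdgeCliqueCover twisterComplement _ :=
    isEdgeCliqueCover_fromRel twisterComplementCliques
  have hcard : #(twisterComplementCliques.toFinset.image ((↑) : Finset (Fin 10) → Set (Fin 10)))
      = 10 := by
    rw [card_image_of_injective _ coe_injective]
    rfl
  obtain ⟨𝒟, h𝒟, h𝒟card⟩ := hcover.exists_card_eq_edgeCliqueCoverNumber
  have hlower := h𝒟.sum_degree_ceilDiv_le twisterComplement_cliqueFree_four
  rw [sum_degree_twisterComplement_ceilDiv_two, h𝒟card] at hlower
  have hupper := hcover.edgeCliqueCoverNumber_le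
  omega
end

section
/- Let H be a graph and F be a valid set of pairs for H (every vertex of H belongs to at most one member of F). Let G be a thickening of (H,F), and suppose no isolated vertex of H∖F belongs to a member of F. If H∖F admits an edge clique covering of size at most |V(H)|−t for some integer t, then G admits an edge clique covering of size at most |V(G)|−t. -/
open SimpleGraph

/-- A set of unordered pairs of vertices is *valid* if each pair consists of two distinct
vertices and every vertex belongs to at most one member. -/
def IsValidPairSet {V : Type*} (F : Set (Sym2 V)) : Prop :=
  (∀ e ∈ F, ¬ e.IsDiag) ∧ ∀ v : V, Set.Subsingleton {e | e ∈ F ∧ v ∈ e}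

/-- `G` is a thickening of `(H, F)` via the family `X`: the sets `X v` are nonempty cliques
partitioning `V(G)`; `X u` is complete to `X v` whenever `u, v` are adjacent in `H` with
`{u,v} ∉ F`; `X u` is anticomplete to `X v` whenever `u, v` are distinct nonadjacent with
`{u,v} ∉ F`; and `X u` is neither complete nor anticomplete to `X v` whenever `{u,v} ∈ F`. -/
structure IsThickening {VH VG : Type*} (H : SimpleGraph VH) (F : Set (Sym2 VH))
    (G : SimpleGraph VG) (X : VH → Set VG) : Prop where
  nonempty : ∀ v : VH, (X v).Nonempty
  partition : ∀ w : VG, ∃! v : VH, w ∈ X v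
  clique : ∀ v : VH, G.IsClique (X v)
  complete_of_adj : ∀ u v : VH, H.Adj u v → s(u, v) ∉ F →
    ∀ x ∈ X u, ∀ y ∈ X v, G.Adj x y
  anticomplete_of_not_adj : ∀ u v : VH, u ≠ v → ¬ H.Adj u v → s(u, v) ∉ F →
    ∀ x ∈ X u, ∀ y ∈ X v, ¬ G.Adj x y
  mixed : ∀ u v : VH, s(u, v) ∈ F →
    (∃ x ∈ X u, ∃ y ∈ X v, ¬ G.Adj x y) ∧ (∃ x ∈ X u, ∃ y ∈ X v, G.Adj x y)

/-- If `G` is a thickening of `(H, F)` for a valid set `F`, no isolated vertex of `H ∖ F`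
belongs to a member of `F`, and `H ∖ F` has an edge clique covering of size at most
`|V(H)| − t`, then `G` has an edge clique covering of size at most `|V(G)| − t`. -/
theorem stmt_6 {VH VG : Type*} [Fintype VH] [Fintype VG]
    (H : SimpleGraph VH) (F : Set (Sym2 VH)) (G : SimpleGraph VG) (X : VH → Set VG)
    (hF : IsValidPairSet F) (hT : IsThickening H F G X)
    (hiso : ∀ v : VH, (∀ u : VH, ¬ (H.deleteEdges F).Adj v u) → ∀ e ∈ F, v ∉ e)
    (t : ℤ)
    (hcov : ∃ 𝒞 : Finset (Set VH), IsEdgeCliqueCover (H.deleteEdges F) 𝒞 ∧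
      (𝒞.card : ℤ) ≤ (Fintype.card VH : ℤ) - t) :
    ∃ 𝒟 : Finset (Set VG), IsEdgeCliqueCover G 𝒟 ∧
      (𝒟.card : ℤ) ≤ (Fintype.card VG : ℤ) - t := by
  classical
  obtain ⟨𝒞, ⟨h𝒞clique, h𝒞cov⟩, h𝒞card⟩ := hcov
  choose proj hproj huniq using fun w => hT.partition w
  have hmemproj : ∀ v (w : VG), w ∈ X v ↔ proj w = v := fun v w =>
    ⟨fun h => (huniq w v h).symm, fun h => h ▸ hproj w⟩
  set XF : VH → Finset VG := fun v => Finset.univ.filter (fun w => w ∈ X v) with hXFdef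
  have hmemXF : ∀ v (w : VG), w ∈ XF v ↔ w ∈ X v := by
    intro v w; simp [hXFdef]
  have hn1 : ∀ v, 1 ≤ (XF v).card := by
    intro v
    obtain ⟨w, hw⟩ := hT.nonempty v
    exact Finset.card_pos.mpr ⟨w, (hmemXF v w).mpr hw⟩
  -- |V(G)| = ∑ |X v|
  have hcardVG : Fintype.card VG = ∑ v : VH, (XF v).card := by
    rw [← Finset.card_univ,
      Finset.card_eq_sum_card_fiberwise (f := proj) (t := Finset.univ)
        (fun x _ => Finset.mem_univ _)]
    refine Finset.sum_congr rfl fun v _ => ?_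
    congr 1
    ext w
    simp [hXFdef, hmemproj]
  set FS : Finset (Sym2 VH) := Finset.univ.filter (fun e => e ∈ F) with hFSdef
  have hmemFS : ∀ e : Sym2 VH, e ∈ FS ↔ e ∈ F := by
    intro e; simp [hFSdef]
  -- choose an orientation for each pair in F such that the second side has ≥ 2 vertices
  have hkey : ∀ e ∈ FS, ∃ p : VH × VH, e = s(p.1, p.2) ∧ 2 ≤ (XF p.2).card := by
    intro e
    induction e using Sym2.ind with
    | _ u v =>
      intro he
      have heF : s(u, v) ∈ F := (hmemFS _).mp he
      obtain ⟨⟨x1, hx1, y1, hy1, hne⟩, ⟨x2, hx2, y2, hy2, ha⟩⟩ := hT.mixed u v heF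
      by_cases h2 : 2 ≤ (XF v).card
      · exact ⟨(u, v), rfl, h2⟩
      · refine ⟨(v, u), Sym2.eq_swap.symm, ?_⟩
        by_contra h2u
        push_neg at h2 h2u
        have hyy : y1 = y2 :=
          Finset.card_le_one.mp (Nat.lt_succ_iff.mp h2) _ ((hmemXF v y1).mpr hy1)
            _ ((hmemXF v y2).mpr hy2)
        have hxx : x1 = x2 :=
          Finset.card_le_one.mp (Nat.lt_succ_iff.mp h2u) _ ((hmemXF u x1).mpr hx1)
            _ ((hmemXF u x2).mpr hx2)
        exact hne (hxx ▸ hyy ▸ ha)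
  choose g hg1 hg2 using hkey
  -- the pieces of the cover
  set Siso : Finset VH :=
    Finset.univ.filter (fun v => (∀ u, ¬ (H.deleteEdges F).Adj v u) ∧ 2 ≤ (XF v).card)
    with hSisodef
  set D1 : Finset (Set VG) := 𝒞.image (fun C => ⋃ v ∈ C, X v) with hD1def
  set D2 : Finset (Set VG) := Siso.image (fun v => X v) with hD2def
  set D3 : Finset (Set VG) := FS.attach.biUnion (fun e =>
    (XF (g e.1 e.2).1).image
      (fun x => insert x {y | y ∈ X (g e.1 e.2).2 ∧ G.Adj x y})) with hD3def
  refine ⟨D1 ∪ D2 ∪ D3, ⟨?_, ?_⟩, ?_⟩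
  · -- every member is a clique
    intro S hS
    rcases Finset.mem_union.mp hS with hS | hS
    · rcases Finset.mem_union.mp hS with hS | hS
      · -- D1
        obtain ⟨C, hC, rfl⟩ := Finset.mem_image.mp hS
        intro x hx y hy hxy
        simp only [Set.mem_iUnion] at hx hy
        obtain ⟨a, ha, hxa⟩ := hx
        obtain ⟨b, hb, hyb⟩ := hy
        by_cases hab : a = b
        · exact hT.clique b (hab ▸ hxa) hyb hxy
        · have hadj : (H.deleteEdges F).Adj a b := h𝒞clique C hC ha hb hab
          rw [deleteEdges_adj] at hadj
          exact hT.complete_of_adj a b hadj.1 hadj.2 x hxa y hyb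
      · -- D2
        obtain ⟨v, _, rfl⟩ := Finset.mem_image.mp hS
        exact hT.clique v
    · -- D3
      obtain ⟨e, _, hS⟩ := Finset.mem_biUnion.mp hS
      obtain ⟨x, _, rfl⟩ := Finset.mem_image.mp hS
      refine IsClique.insert ?_ ?_
      · exact IsClique.subset (fun y hy => hy.1) (hT.clique (g e.1 e.2).2)
      · intro b hb hxb
        exact hb.2
  · -- coverage
    intro x y hxy
    set u := proj x with hu
    set v := proj y with hv
    have hxu : x ∈ X u := hproj x
    have hyv : y ∈ X v := hproj y
    by_cases huv : u = v
    · -- both in the same X u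
      by_cases hisou : ∀ w, ¬ (H.deleteEdges F).Adj u w
      · -- isolated vertex: use X u ∈ D2
        have h2 : 2 ≤ (XF u).card :=
          Finset.one_lt_card.mpr ⟨x, (hmemXF u x).mpr hxu, y,
            (hmemXF u y).mpr (huv ▸ hyv), hxy.ne⟩
        refine ⟨X u, ?_, hxu, huv ▸ hyv⟩
        refine Finset.mem_union_left _ (Finset.mem_union_right _ ?_)
        exact Finset.mem_image.mpr ⟨u, Finset.mem_filter.mpr ⟨Finset.mem_univ _, hisou, h2⟩, rfl⟩
      · push_neg at hisou
        obtain ⟨w, hw⟩ := hisou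
        obtain ⟨C, hC, huC, _⟩ := h𝒞cov hw
        refine ⟨⋃ a ∈ C, X a, ?_, ?_, ?_⟩
        · exact Finset.mem_union_left _ (Finset.mem_union_left _
            (Finset.mem_image.mpr ⟨C, hC, rfl⟩))
        · exact Set.mem_iUnion₂.mpr ⟨u, huC, hxu⟩
        · exact Set.mem_iUnion₂.mpr ⟨u, huC, huv ▸ hyv⟩
    · by_cases hFuv : s(u, v) ∈ F
      · -- mixed pair: use D3
        have heFS : s(u, v) ∈ FS := (hmemFS _).mpr hFuv
        set e : {e // e ∈ FS} := ⟨s(u, v), heFS⟩ with hedef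
        set a := (g e.1 e.2).1 with hadef
        set b := (g e.1 e.2).2 with hbdef
        have heab : s(u, v) = s(a, b) := hg1 e.1 e.2
        rcases Sym2.eq_iff.mp heab with ⟨hua, hvb⟩ | ⟨hub, hva⟩
        · refine ⟨insert x {y' | y' ∈ X b ∧ G.Adj x y'}, ?_, Set.mem_insert _ _,
            Set.mem_insert_of_mem _ ⟨hvb ▸ hyv, hxy⟩⟩
          refine Finset.mem_union_right _ (Finset.mem_biUnion.mpr ⟨e, Finset.mem_attach _ _, ?_⟩)
          exact Finset.mem_image.mpr ⟨x, (hmemXF a x).mpr (hua ▸ hxu), rfl⟩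
        · refine ⟨insert y {y' | y' ∈ X b ∧ G.Adj y y'}, ?_, Set.mem_insert_of_mem _
            ⟨hub ▸ hxu, hxy.symm⟩, Set.mem_insert _ _⟩
          refine Finset.mem_union_right _ (Finset.mem_biUnion.mpr ⟨e, Finset.mem_attach _ _, ?_⟩)
          exact Finset.mem_image.mpr ⟨y, (hmemXF a y).mpr (hva ▸ hyv), rfl⟩
      · -- nonadjacent would contradict hxy, so H.Adj u v and covered by 𝒞
        have hHuv : H.Adj u v := by
          by_contra hH
          exact hT.anticomplete_of_not_adj u v huv hH hFuv x hxu y hyv hxy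
        obtain ⟨C, hC, huC, hvC⟩ := h𝒞cov (deleteEdges_adj.mpr ⟨hHuv, hFuv⟩)
        refine ⟨⋃ a ∈ C, X a, ?_, ?_, ?_⟩
        · exact Finset.mem_union_left _ (Finset.mem_union_left _
            (Finset.mem_image.mpr ⟨C, hC, rfl⟩))
        · exact Set.mem_iUnion₂.mpr ⟨u, huC, hxu⟩
        · exact Set.mem_iUnion₂.mpr ⟨v, hvC, hyv⟩
  · -- cardinality bound
    set E3 : ℕ := ∑ e ∈ FS.attach, (XF (g e.1 e.2).1).card with hE3def
    have hD1c : D1.card ≤ 𝒞.card := Finset.card_image_le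
    have hD2c : D2.card ≤ Siso.card := Finset.card_image_le
    have hD3c : D3.card ≤ E3 := by
      refine le_trans Finset.card_biUnion_le ?_
      exact Finset.sum_le_sum fun e _ => Finset.card_image_le
    -- vertices of a pair belong to the pair
    have hvert : ∀ (e : {x // x ∈ FS}) (w : VH),
        w = (g e.1 e.2).1 ∨ w = (g e.1 e.2).2 → w ∈ e.1 := by
      intro e w hw
      rw [hg1 e.1 e.2]
      rcases hw with rfl | rfl
      · exact Sym2.mem_mk_left _ _
      · exact Sym2.mem_mk_right _ _
    have hab_ne : ∀ (e : {x // x ∈ FS}), (g e.1 e.2).1 ≠ (g e.1 e.2).2 := by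
      intro e h
      have hdiag : (e.1 : Sym2 VH).IsDiag := by
        rw [hg1 e.1 e.2, Sym2.mk_isDiag_iff]; exact h
      exact hF.1 e.1 ((hmemFS e.1).mp e.2) hdiag
    -- key counting inequality
    have hN : Siso.card + E3 + Fintype.card VH ≤ Fintype.card VG := by
      set P : Finset VH := FS.attach.biUnion
        (fun e => ({(g e.1 e.2).1, (g e.1 e.2).2} : Finset VH)) with hPdef
      have hdisj : Disjoint Siso P := by
        rw [Finset.disjoint_left]
        intro w hwS hwP
        obtain ⟨e, _, hwE⟩ := Finset.mem_biUnion.mp hwP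
        have hwE' : w ∈ e.1 := hvert e w (by simpa using hwE)
        have hwiso : ∀ u, ¬ (H.deleteEdges F).Adj w u :=
          (Finset.mem_filter.mp hwS).2.1
        exact hiso w hwiso e.1 ((hmemFS e.1).mp e.2) hwE'
      have hpw : (↑FS.attach : Set {x // x ∈ FS}).PairwiseDisjoint
          (fun e => ({(g e.1 e.2).1, (g e.1 e.2).2} : Finset VH)) := by
        intro e _ e' _ hee
        rw [Function.onFun, Finset.disjoint_left]
        intro w hw hw'
        have h1 : w ∈ e.1 := hvert e w (by simpa using hw)
        have h2 : w ∈ e'.1 := hvert e' w (by simpa using hw')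
        have : e.1 = e'.1 := hF.2 w ⟨(hmemFS e.1).mp e.2, h1⟩ ⟨(hmemFS e'.1).mp e'.2, h2⟩
        exact hee (Subtype.ext this)
      have hsub : Siso ∪ P ⊆ Finset.univ := Finset.subset_univ _
      have hstep1 : ∑ v ∈ Siso ∪ P, ((XF v).card - 1) ≤ ∑ v : VH, ((XF v).card - 1) :=
        Finset.sum_le_sum_of_subset hsub
      have hstep2 : ∑ v ∈ Siso ∪ P, ((XF v).card - 1)
          = ∑ v ∈ Siso, ((XF v).card - 1) + ∑ v ∈ P, ((XF v).card - 1) :=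
        Finset.sum_union hdisj
      have hstep3 : Siso.card ≤ ∑ v ∈ Siso, ((XF v).card - 1) := by
        rw [Finset.card_eq_sum_ones]
        refine Finset.sum_le_sum fun v hv => ?_
        have h2 : 2 ≤ (XF v).card := (Finset.mem_filter.mp hv).2.2
        omega
      have hstep4 : E3 ≤ ∑ v ∈ P, ((XF v).card - 1) := by
        rw [hPdef, Finset.sum_biUnion hpw, hE3def]
        refine Finset.sum_le_sum fun e _ => ?_
        rw [Finset.sum_pair (hab_ne e)]
        have ha1 := hn1 (g e.1 e.2).1
        have hb2 := hg2 e.1 e.2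
        omega
      have hstep5 : ∑ v : VH, ((XF v).card - 1) + Fintype.card VH = ∑ v : VH, (XF v).card := by
        rw [← Finset.card_univ, Finset.card_eq_sum_ones, ← Finset.sum_add_distrib]
        exact Finset.sum_congr rfl fun v _ => Nat.sub_add_cancel (hn1 v)
      rw [hcardVG]
      omega
    have hDc : (D1 ∪ D2 ∪ D3).card ≤ D1.card + D2.card + D3.card :=
      le_trans (Finset.card_union_le _ _)
        (Nat.add_le_add_right (Finset.card_union_le _ _) _)
    have h1 : ((D1 ∪ D2 ∪ D3).card : ℤ) ≤ (𝒞.card : ℤ) + Siso.card + E3 := by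
      have := hDc
      have := hD1c; have := hD2c; have := hD3c
      omega
    have h2 : (Siso.card : ℤ) + E3 + Fintype.card VH ≤ Fintype.card VG := by
      exact_mod_cast hN
    linarith
end

section
/- Let G be a claw-free graph and let X, Y be disjoint subsets of V(G) with X nonempty. Suppose that for every two nonadjacent vertices y, y' ∈ Y, every vertex of X is adjacent to exactly one of y and y'. Then Y is the union of two cliques of G. -/
open SimpleGraph

/-- A graph is claw-free if it has no induced subgraph isomorphic to `K_{1,3}`: there is no
vertex `a` with three pairwise distinct, pairwise nonadjacent neighbours `b, c, d`. -/
def ClawFree {V : Type*} (G : SimpleGraph V) : Prop :=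
  ∀ a b c d : V, G.Adj a b → G.Adj a c → G.Adj a d →
    ¬ G.Adj b c → ¬ G.Adj b d → ¬ G.Adj c d → b ≠ c → b ≠ d → c ≠ d → False

/-- Let `G` be claw-free and `X, Y` disjoint sets of vertices with `X` nonempty. If every
vertex of `X` is adjacent to exactly one member of every nonadjacent pair in `Y`, then `Y` is
the union of two cliques. -/
theorem stmt_7 {V : Type*} (G : SimpleGraph V) (hG : ClawFree G)
    (X Y : Set V) (hXY : Disjoint X Y) (hX : X.Nonempty)
    (h : ∀ y ∈ Y, ∀ y' ∈ Y, y ≠ y' → ¬ G.Adj y y' →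
      ∀ x ∈ X, Xor' (G.Adj x y) (G.Adj x y')) :
    ∃ C₁ C₂ : Set V, G.IsClique C₁ ∧ G.IsClique C₂ ∧ Y = C₁ ∪ C₂ := by
  obtain ⟨x, hx⟩ := hX
  refine ⟨{y ∈ Y | G.Adj x y}, {y ∈ Y | ¬ G.Adj x y}, ?_, ?_, ?_⟩
  · intro y hy y' hy' hne
    by_contra hadj
    rcases h y hy.1 y' hy'.1 hne hadj x hx with ⟨_, hn⟩ | ⟨_, hn⟩
    · exact hn hy'.2
    · exact hn hy.2
  · intro y hy y' hy' hne
    by_contra hadj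
    rcases h y hy.1 y' hy'.1 hne hadj x hx with ⟨ha, _⟩ | ⟨ha, _⟩
    · exact hy.2 ha
    · exact hy'.2 ha
  · ext y
    constructor
    · intro hy
      by_cases hxy : G.Adj x y
      · exact Or.inl ⟨hy, hxy⟩
      · exact Or.inr ⟨hy, hxy⟩
    · rintro (⟨hy, _⟩ | ⟨hy, _⟩) <;> exact hy
end

section
/- Let G be an antiprismatic graph, let a_0 be a vertex of G contained in a triad, and set A = N(a_0) in the complement of G (the set of non-neighbors of a_0). Then, writing the non-edges within A as a perfect matching {x_1y_1,…,x_ky_k} on A∖Ã (where Ã is the set of vertices of A with no non-neighbor in A), every vertex of B = N_G(a_0) is adjacent to exactly one of x_i and y_i for each i. -/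
open SimpleGraph

/-- A triad: three pairwise distinct, pairwise nonadjacent vertices. -/
def IsTriad {V : Type*} (G : SimpleGraph V) (x y z : V) : Prop :=
  x ≠ y ∧ x ≠ z ∧ y ≠ z ∧ ¬ G.Adj x y ∧ ¬ G.Adj x z ∧ ¬ G.Adj y z

/-- A graph is antiprismatic if for every triad `{x, y, z}` and every vertex `v` outside it,
`v` has exactly two neighbours in `{x, y, z}`. -/
def Antiprismatic {V : Type*} (G : SimpleGraph V) : Prop :=
  ∀ x y z : V, IsTriad G x y z → ∀ v : V, v ≠ x → v ≠ y → v ≠ z →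
    ((¬ G.Adj v x ∧ G.Adj v y ∧ G.Adj v z) ∨
     (G.Adj v x ∧ ¬ G.Adj v y ∧ G.Adj v z) ∨
     (G.Adj v x ∧ G.Adj v y ∧ ¬ G.Adj v z))

/-- Let `G` be antiprismatic, `a₀` a vertex contained in a triad, `A` the set of
non-neighbours of `a₀`, and `Ã ⊆ A` the vertices of `A` with no non-neighbour in `A`.
Then the non-edges inside `A` form a perfect matching on `A ∖ Ã` (every vertex of `A ∖ Ã`
has exactly one non-neighbour in `A`), and every vertex of `B = N_G(a₀)` is adjacent to
exactly one endpoint of every non-edge inside `A`. -/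
theorem stmt_11 {V : Type*} (G : SimpleGraph V) (hap : Antiprismatic G)
    (a₀ b₀ c₀ : V) (ht : IsTriad G a₀ b₀ c₀)
    (A Atilde : Set V)
    (hA : A = {v : V | v ≠ a₀ ∧ ¬ G.Adj a₀ v})
    (hAt : Atilde = {v : V | v ∈ A ∧ ∀ u ∈ A, u ≠ v → G.Adj v u}) :
    (∀ x ∈ A \ Atilde, ∃! y : V, y ∈ A ∧ y ≠ x ∧ ¬ G.Adj x y) ∧
    (∀ b : V, G.Adj a₀ b → ∀ x ∈ A, ∀ y ∈ A, x ≠ y → ¬ G.Adj x y →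
      Xor' (G.Adj b x) (G.Adj b y)) := by
  subst hA hAt
  constructor
  · rintro x ⟨hxA, hx2⟩
    obtain ⟨hxa, hxadj⟩ := hxA
    simp only [Set.mem_setOf_eq, not_and, not_forall] at hx2
    obtain ⟨u, hu, hux, hnadj⟩ := hx2 ⟨hxa, hxadj⟩
    refine ⟨u, ⟨hu, hux, hnadj⟩, ?_⟩
    rintro z ⟨hzA, hzx, hznadj⟩
    by_contra hzu
    have htr : IsTriad G a₀ x u :=
      ⟨Ne.symm hxa, Ne.symm hu.1, Ne.symm hux, hxadj, hu.2, hnadj⟩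
    rcases hap a₀ x u htr z hzA.1 hzx hzu with ⟨_, h, _⟩ | ⟨h, _, _⟩ | ⟨h, _, _⟩
    · exact hznadj h.symm
    · exact hzA.2 h.symm
    · exact hzA.2 h.symm
  · intro b hb x hx y hy hxy hnadj
    have hba : b ≠ a₀ := fun h => G.irrefl (h ▸ hb)
    have hbx : b ≠ x := fun h => hx.2 (h ▸ hb)
    have hby : b ≠ y := fun h => hy.2 (h ▸ hb)
    have htr : IsTriad G a₀ x y := ⟨Ne.symm hx.1, Ne.symm hy.1, hxy, hx.2, hy.2, hnadj⟩
    rcases hap a₀ x y htr b hba hbx hby with ⟨h, _, _⟩ | ⟨_, h1, h2⟩ | ⟨_, h1, h2⟩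
    · exact absurd hb.symm h
    · exact Or.inr ⟨h2, h1⟩
    · exact Or.inl ⟨h1, h2⟩
end

section
/- If G is a connected fuzzy antiprismatic graph on n vertices containing at least one triad, then cc(G) ≤ n + 3(1+o(1))log n. More precisely: if H is an antiprismatic graph on m vertices containing a triad, then cc(H) ≤ m + 3·f(m) where f(m) is the clique cover number bound (1+o(1))log m for covering the complement of a perfect matching. -/
open SimpleGraph

/-- A pair of nonadjacent vertices `{u, v}` of an antiprismatic graph `H` is *changeable* if
adding the edge `uv` keeps the graph antiprismatic. -/
def ChangeablePair {V : Type*} (H : SimpleGraph V) (u v : V) : Prop :=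
  u ≠ v ∧ ¬ H.Adj u v ∧ Antiprismatic (H ⊔ SimpleGraph.fromEdgeSet {s(u, v)})

/-- A graph is fuzzy antiprismatic if it is a thickening of `(H, F)` for some antiprismatic
graph `H` and some valid set `F` of changeable pairs of `H`. -/
def FuzzyAntiprismatic {VG : Type*} (G : SimpleGraph VG) : Prop :=
  ∃ (VH : Type) (H : SimpleGraph VH) (F : Set (Sym2 VH)) (X : VH → Set VG),
    Antiprismatic H ∧ IsValidPairSet F ∧
    (∀ u v : VH, s(u, v) ∈ F → ChangeablePair H u v) ∧
    IsThickening H F G X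

section Helpers

open Finset Filter

lemma choose_mid (k : ℕ) (hk : 1 ≤ k) : 2 ^ (k-1) ≤ k * (k-1).choose ((k-1)/2) := by
  calc 2 ^ (k-1) = ∑ i ∈ range ((k-1)+1), (k-1).choose i := (Nat.sum_range_choose (k-1)).symm
    _ ≤ ∑ _i ∈ range ((k-1)+1), (k-1).choose ((k-1)/2) :=
        Finset.sum_le_sum fun i _ => Nat.choose_le_middle i (k-1)
    _ = ((k-1)+1) * (k-1).choose ((k-1)/2) := by
        rw [Finset.sum_const, card_range, smul_eq_mul]
    _ ≤ k * (k-1).choose ((k-1)/2) := by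
        have : (k-1)+1 = k := by omega
        rw [this]

lemma arith (ε : ℝ) (hε : 0 < ε) : ∃ N : ℕ, ∀ n : ℕ, N ≤ n →
    ∃ k : ℕ, 2 ≤ k ∧ k % 2 = 0 ∧ n ≤ (k-1).choose ((k-1)/2) ∧
      (k : ℝ) ≤ (1+ε) * Real.logb 2 n := by
  have hε2 : 0 < ε/2 := by linarith
  have hlog2 : (0:ℝ) < Real.log 2 := Real.log_pos (by norm_num)
  have h1 : ∀ᶠ x : ℝ in atTop, 2 ≤ (ε/2) * Real.logb 2 x := by
    have ht : Tendsto (fun x : ℝ => (ε/2) * Real.logb 2 x) atTop atTop :=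
      (Real.tendsto_logb_atTop (by norm_num : (1:ℝ) < 2)).const_mul_atTop hε2
    exact ht.eventually_ge_atTop 2
  have h2 : ∀ᶠ x : ℝ in atTop, 2 * ((1+ε) * Real.logb 2 x + 2) ≤ x ^ (ε/2) := by
    have hC : 0 < Real.log 2 / (8 * (1+ε)) := by positivity
    have ho := (isLittleO_log_rpow_atTop hε2).def hC
    have h8 : ∀ᶠ x : ℝ in atTop, (8:ℝ) ≤ x ^ (ε/2) :=
      (tendsto_rpow_atTop hε2).eventually_ge_atTop 8
    have hx0 : ∀ᶠ x : ℝ in atTop, (1:ℝ) ≤ x := eventually_ge_atTop 1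
    filter_upwards [ho, h8, hx0] with x hx hx8 hx1
    have hlx : 0 ≤ Real.log x := Real.log_nonneg hx1
    have hrx : 0 ≤ x ^ (ε/2) := Real.rpow_nonneg (by linarith) _
    rw [Real.norm_eq_abs, Real.norm_eq_abs, abs_of_nonneg hlx, abs_of_nonneg hrx] at hx
    have hlogb : Real.logb 2 x = Real.log x / Real.log 2 := rfl
    rw [hlogb]
    have hx' : Real.log x * (8*(1+ε)) ≤ Real.log 2 * x ^ (ε/2) := by
      rw [div_mul_eq_mul_div, le_div_iff₀ (by positivity : (0:ℝ) < 8*(1+ε))] at hx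
      linarith
    have key : 2 * (1+ε) * (Real.log x / Real.log 2) ≤ x ^ (ε/2) / 2 := by
      rw [← mul_div_assoc, div_le_div_iff₀ hlog2 (by norm_num : (0:ℝ) < 2)]
      nlinarith [hx', hlx]
    nlinarith [hx8, key]
  obtain ⟨x₀, hx₀⟩ := (h1.and h2).exists_forall_of_atTop
  refine ⟨max 2 ⌈x₀⌉₊, fun n hn => ?_⟩
  have hn2 : 2 ≤ n := le_trans (le_max_left _ _) hn
  have hxn : x₀ ≤ (n:ℝ) := by
    have : ⌈x₀⌉₊ ≤ n := le_trans (le_max_right _ _) hn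
    exact le_trans (Nat.le_ceil x₀) (by exact_mod_cast this)
  obtain ⟨hc1, hc2⟩ := hx₀ n hxn
  set r := Real.logb 2 (n:ℝ) with hr
  have hrpos : 0 < r := by nlinarith
  have hnpos : (0:ℝ) < n := by positivity
  set k := 2 * ⌈(1+ε/2) * r / 2⌉₊ with hkdef
  have hklb : (1+ε/2) * r ≤ (k:ℝ) := by
    have := Nat.le_ceil ((1+ε/2) * r / 2)
    push_cast [hkdef]
    linarith
  have hkub : (k:ℝ) ≤ (1+ε/2) * r + 2 := by
    have := Nat.ceil_lt_add_one (by positivity : (0:ℝ) ≤ (1+ε/2) * r / 2)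
    push_cast [hkdef]
    linarith
  have hk2 : 2 ≤ k := by
    have : 0 < ⌈(1+ε/2) * r / 2⌉₊ := Nat.ceil_pos.mpr (by positivity)
    omega
  have hkfin : (k:ℝ) ≤ (1+ε) * r := by nlinarith
  refine ⟨k, hk2, by omega, ?_, hkfin⟩
  have h2r : (2:ℝ) ^ r = n := Real.rpow_logb (by norm_num) (by norm_num) hnpos
  have hpowR : (k:ℝ) * n ≤ (2:ℝ) ^ ((k:ℝ) - 1) := by
    have e1 : (2:ℝ) ^ ((k:ℝ) - 1) ≥ (2:ℝ) ^ ((1+ε/2) * r - 1) := by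
      apply Real.rpow_le_rpow_left_iff (by norm_num : (1:ℝ) < 2) |>.mpr
      linarith
    have e2 : (2:ℝ) ^ ((1+ε/2) * r - 1) = (n:ℝ) * (n:ℝ) ^ (ε/2) / 2 := by
      rw [Real.rpow_sub (by norm_num : (0:ℝ) < 2), Real.rpow_one]
      congr 1
      have : (1+ε/2) * r = r * (1+ε/2) := by ring
      rw [this, Real.rpow_mul (by norm_num : (0:ℝ) ≤ 2), h2r]
      rw [show (1+ε/2) = 1 + ε/2 by rfl, Real.rpow_add hnpos, Real.rpow_one]
    rw [ge_iff_le, e2] at e1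
    have h2k : 2 * (k:ℝ) ≤ (n:ℝ) ^ (ε/2) := by nlinarith
    nlinarith [Real.rpow_nonneg (le_of_lt hnpos) (ε/2)]
  have hnatpow : k * n ≤ 2 ^ (k-1) := by
    have hcast : ((k * n : ℕ) : ℝ) ≤ ((2 ^ (k-1) : ℕ) : ℝ) := by
      push_cast
      have hh : ((k-1:ℕ):ℝ) = (k:ℝ) - 1 := by
        have : 1 ≤ k := by omega
        push_cast [this]
        ring
      rw [show ((2:ℝ) ^ (k-1) : ℝ) = (2:ℝ) ^ (((k-1:ℕ)):ℝ) from (Real.rpow_natCast 2 (k-1)).symm,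
        hh]
      exact hpowR
    exact_mod_cast hcast
  have := le_trans hnatpow (choose_mid k (by omega))
  exact Nat.le_of_mul_le_mul_left this (by omega)

lemma exists_code {α : Type*} [Fintype α] (bad : α → α → Prop)
    (hsym : ∀ u v, bad u v → bad v u)
    (hne : ∀ u v, bad u v → u ≠ v)
    (huniq : ∀ u v w, bad u v → bad u w → v = w)
    (k : ℕ) (hk2 : 2 ≤ k) (hke : k % 2 = 0)
    (hcard : Fintype.card α ≤ (k-1).choose ((k-1)/2)) :
    ∃ S : α → Finset (Fin k), (∀ u, (S u).Nonempty) ∧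
      (∀ u v, bad u v → Disjoint (S u) (S v)) ∧
      (∀ u v, u ≠ v → ¬ bad u v → (S u ∩ S v).Nonempty) := by
  classical
  have hkpos : 0 < k := by omega
  set z : Fin k := ⟨0, hkpos⟩ with hz
  set ground : Finset (Fin k) := Finset.univ.erase z with hground
  have hgcard : ground.card = k - 1 := by
    rw [hground, card_erase_of_mem (mem_univ z), card_univ, Fintype.card_fin]
  set pc := Finset.powersetCard ((k-1)/2) ground with hpc
  have hpccard : pc.card = (k-1).choose ((k-1)/2) := by
    rw [hpc, Finset.card_powersetCard, hgcard]
  obtain ⟨g⟩ : Nonempty (α ↪ ↥pc) := by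
    apply Function.Embedding.nonempty_of_card_le
    rw [Fintype.card_coe, hpccard]; exact hcard
  have gsub : ∀ u : α, ((g u : Finset (Fin k)) ⊆ ground) ∧ (g u : Finset (Fin k)).card = (k-1)/2 :=
    fun u => (Finset.mem_powersetCard.mp (g u).2)
  have gz : ∀ u : α, z ∉ (g u : Finset (Fin k)) := by
    intro u hu
    have := (gsub u).1 hu
    exact (Finset.notMem_erase z Finset.univ) this
  have hpart : ∀ u : α, ∃ p : α, ∀ v, bad u v → v = p := by
    intro u
    by_cases h : ∃ v, bad u v
    · obtain ⟨v, hv⟩ := h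
      exact ⟨v, fun w hw => huniq u w v hw hv⟩
    · exact ⟨u, fun w hw => absurd ⟨w, hw⟩ h⟩
  choose pt hpt using hpart
  set e : α → ℕ := fun u => ((Fintype.equivFin α) u : ℕ) with he
  have einj : ∀ u v, e u = e v → u = v := by
    intro u v h
    exact (Fintype.equivFin α).injective (Fin.ext h)
  set prim : α → Prop := fun u => ∀ v, bad u v → e u < e v with hprim
  set S : α → Finset (Fin k) :=
    fun u => if prim u then insert z (g u : Finset (Fin k))
      else ground \ (g (pt u) : Finset (Fin k)) with hS
  have hScard2 : ∀ u, ¬ prim u → (S u).card = (k-1) - (k-1)/2 := by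
    intro u hu
    rw [hS]; simp only [if_neg hu]
    rw [Finset.card_sdiff_of_subset ((gsub (pt u)).1)]
    rw [hgcard, (gsub (pt u)).2]
  have hSsub2 : ∀ u, ¬ prim u → S u ⊆ ground := by
    intro u hu
    rw [hS]; simp only [if_neg hu]
    exact Finset.sdiff_subset
  have hsec : ∀ u, ¬ prim u → bad u (pt u) ∧ ¬ e u < e (pt u) := by
    intro u hu
    have hu' : ¬ ∀ v, bad u v → e u < e v := hu
    push_neg at hu'
    obtain ⟨v, hv, hev⟩ := hu'
    have := hpt u v hv
    subst this
    exact ⟨hv, by omega⟩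
  refine ⟨S, ?_, ?_, ?_⟩
  · intro u
    by_cases h : prim u
    · rw [hS]; simp only [if_pos h]; exact ⟨z, Finset.mem_insert_self _ _⟩
    · rw [← Finset.card_pos, hScard2 u h]; omega
  · intro u v huv
    have hvu := hsym u v huv
    have hptu : pt u = v := (hpt u v huv).symm ▸ rfl
    have hptv : pt v = u := (hpt v u hvu).symm ▸ rfl
    have hne' : e u ≠ e v := fun h => hne u v huv (einj u v h)
    rcases lt_or_gt_of_ne hne' with hlt | hgt
    · have hpv : ¬ prim v := by
        intro hp
        have := hp u hvu
        omega
      have hpu : prim u := by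
        intro w hw
        have := hpt u w hw
        subst this
        rw [hptu]; exact hlt
      rw [hS]; simp only [if_pos hpu, if_neg hpv, hptv]
      rw [Finset.disjoint_left]
      intro i hi hi2
      rcases Finset.mem_insert.mp hi with h' | hi'
      · subst h'
        exact (Finset.notMem_erase z Finset.univ) (Finset.mem_sdiff.mp hi2).1
      · exact (Finset.mem_sdiff.mp hi2).2 hi'
    · have hpu : ¬ prim u := by
        intro hp
        have := hp v huv
        omega
      have hpv : prim v := by
        intro w hw
        have := hpt v w hw
        subst this
        rw [hptv]; exact hgt
      rw [hS]; simp only [if_pos hpv, if_neg hpu, hptu]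
      rw [Finset.disjoint_left]
      intro i hi hi2
      rcases Finset.mem_insert.mp hi2 with h' | hi'
      · subst h'
        exact (Finset.notMem_erase z Finset.univ) (Finset.mem_sdiff.mp hi).1
      · exact (Finset.mem_sdiff.mp hi).2 hi'
  · intro u v huv hnbad
    by_cases hpu : prim u <;> by_cases hpv : prim v
    · refine ⟨z, Finset.mem_inter.mpr ⟨?_, ?_⟩⟩ <;>
        · rw [hS]; simp only [if_pos hpu, if_pos hpv]; exact Finset.mem_insert_self _ _
    · have hbadv := (hsec v hpv).1
      have hneq : u ≠ pt v := by
        intro h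
        exact hnbad (hsym v u (h ▸ hbadv))
      have hgne : (g u : Finset (Fin k)) ≠ (g (pt v) : Finset (Fin k)) := by
        intro h
        exact hneq (g.injective (Subtype.ext h))
      obtain ⟨i, hiu, hiv⟩ : ∃ i, i ∈ (g u : Finset (Fin k)) ∧ i ∉ (g (pt v) : Finset (Fin k)) := by
        by_contra hcon
        push_neg at hcon
        exact hgne (Finset.eq_of_subset_of_card_le hcon
          (by rw [(gsub u).2, (gsub (pt v)).2]))
      refine ⟨i, Finset.mem_inter.mpr ⟨?_, ?_⟩⟩
      · rw [hS]; simp only [if_pos hpu]; exact Finset.mem_insert_of_mem hiu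
      · rw [hS]; simp only [if_neg hpv]
        exact Finset.mem_sdiff.mpr ⟨(gsub u).1 hiu, hiv⟩
    · have hbadu := (hsec u hpu).1
      have hneq : v ≠ pt u := by
        intro h
        exact hnbad (h ▸ hbadu)
      have hgne : (g v : Finset (Fin k)) ≠ (g (pt u) : Finset (Fin k)) := by
        intro h
        exact hneq (g.injective (Subtype.ext h))
      obtain ⟨i, hiu, hiv⟩ : ∃ i, i ∈ (g v : Finset (Fin k)) ∧ i ∉ (g (pt u) : Finset (Fin k)) := by
        by_contra hcon
        push_neg at hcon
        exact hgne (Finset.eq_of_subset_of_card_le hcon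
          (by rw [(gsub v).2, (gsub (pt u)).2]))
      refine ⟨i, Finset.mem_inter.mpr ⟨?_, ?_⟩⟩
      · rw [hS]; simp only [if_neg hpu]
        exact Finset.mem_sdiff.mpr ⟨(gsub v).1 hiu, hiv⟩
      · rw [hS]; simp only [if_pos hpv]; exact Finset.mem_insert_of_mem hiu
    · have h1 := hScard2 u hpu
      have h2 := hScard2 v hpv
      have hsub1 := hSsub2 u hpu
      have hsub2 := hSsub2 v hpv
      rw [← Finset.card_pos]
      have hun : (S u ∪ S v).card ≤ k - 1 := by
        rw [← hgcard]
        exact Finset.card_le_card (Finset.union_subset hsub1 hsub2)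
      have := Finset.card_union_add_card_inter (S u) (S v)
      omega

lemma IsTriad.rot {V : Type*} {H : SimpleGraph V} {a b c : V} (h : IsTriad H a b c) :
    IsTriad H b c a := by
  obtain ⟨h1, h2, h3, h4, h5, h6⟩ := h
  exact ⟨h3, h1.symm, h2.symm, h6, fun h' => h4 h'.symm, fun h' => h5 h'.symm⟩

lemma matchA {V : Type*} {H : SimpleGraph V} (hH : Antiprismatic H) {x u v w : V}
    (hu : u ≠ x) (hu2 : ¬H.Adj u x) (hv : v ≠ x) (hv2 : ¬H.Adj v x)
    (hw : w ≠ x) (hw2 : ¬H.Adj w x)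
    (huv : u ≠ v) (huw : u ≠ w) (hvw : v ≠ w)
    (h1 : ¬H.Adj u v) (h2 : ¬H.Adj u w) : False := by
  have htr : IsTriad H u v x := ⟨huv, hu, hv, h1, hu2, hv2⟩
  rcases hH u v x htr w huw.symm hvw.symm hw with ⟨_, _, h⟩ | ⟨h, _, _⟩ | ⟨h, _, _⟩
  · exact hw2 h
  · exact h2 h.symm
  · exact h2 h.symm

lemma two_adj {V : Type*} {H : SimpleGraph V} (hH : Antiprismatic H) {x y z v : V}
    (htr : IsTriad H x y z) (hvx : v ≠ x) (hvy : v ≠ y) (hvz : v ≠ z)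
    (hna : ¬H.Adj v x) : H.Adj v y ∧ H.Adj v z := by
  rcases hH x y z htr v hvx hvy hvz with ⟨_, h2, h3⟩ | ⟨h1, _, _⟩ | ⟨h1, _, _⟩
  · exact ⟨h2, h3⟩
  · exact absurd h1 hna
  · exact absurd h1 hna

lemma crossAdj {V : Type*} {H : SimpleGraph V} (hH : Antiprismatic H) {x y z u v1 v2 : V}
    (htr : IsTriad H x y z)
    (hux : u ≠ x) (huy : u ≠ y) (huz : u ≠ z) (hua : ¬H.Adj u x)
    (hv1y : v1 ≠ y) (hv1a : ¬H.Adj v1 y)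
    (hv2y : v2 ≠ y) (hv2a : ¬H.Adj v2 y)
    (h12 : v1 ≠ v2) (a1 : H.Adj u v1) (a2 : H.Adj u v2) : H.Adj v1 v2 := by
  by_contra hcon
  have htr2 : IsTriad H v1 v2 y := ⟨h12, hv1y, hv2y, hcon, hv1a, hv2a⟩
  have huy2 : H.Adj u y := (two_adj hH htr hux huy huz hua).1
  rcases hH v1 v2 y htr2 u a1.ne a2.ne huy with ⟨h, _, _⟩ | ⟨_, h, _⟩ | ⟨_, _, h⟩
  · exact h a1
  · exact h a2
  · exact h huy2

/-- the set of non-neighbours of `x` (other than `x`). -/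
def Aset {VH : Type*} (H : SimpleGraph VH) (x : VH) : Set VH := {v | v ≠ x ∧ ¬ H.Adj v x}

/-- the non-triad vertices nonadjacent to `x`, for the triad `(x,y,z)`. -/
def PsetR {VH : Type*} (H : SimpleGraph VH) (x y z : VH) : Set VH :=
  {v | v ≠ x ∧ v ≠ y ∧ v ≠ z ∧ ¬ H.Adj v x}

def CJset {VH W : Type*} {k : ℕ} (H : SimpleGraph VH) (X : VH → Set W) (x : VH)
    (S : VH → Finset (Fin k)) (j : Fin k) : Set W :=
  {w | ∃ u, u ∈ Aset H x ∧ j ∈ S u ∧ w ∈ X u}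

def LsetR {VH W : Type*} (H : SimpleGraph VH) (X : VH → Set W) (x y z : VH) (u : VH) : Set W :=
  X u ∪ {w | ∃ v, v ∈ PsetR H y z x ∧ H.Adj u v ∧ w ∈ X v}

def Fset {VH W : Type*} (G : SimpleGraph W) (X : VH → Set W) (p : VH) (w : W) : Set W :=
  {w} ∪ {w' | G.Adj w w' ∧ w' ∈ X p}


lemma Aset_mem {VH : Type*} {H : SimpleGraph VH} {x v : VH} :
    v ∈ Aset H x ↔ v ≠ x ∧ ¬ H.Adj v x := Iff.rfl

lemma PsetR_mem {VH : Type*} {H : SimpleGraph VH} {x y z v : VH} :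
    v ∈ PsetR H x y z ↔ v ≠ x ∧ v ≠ y ∧ v ≠ z ∧ ¬ H.Adj v x := Iff.rfl

lemma offdiag {V : Type*} {H : SimpleGraph V} {x y z u v : V}
    (htr : IsTriad H x y z)
    (hu : u ∈ Aset H x) (hv : v ∈ Aset H y) (hadj : H.Adj u v)
    (hns : ¬(u ∈ Aset H y ∧ v ∈ Aset H y)) (hns2 : ¬(u ∈ Aset H x ∧ v ∈ Aset H x)) :
    u ∈ PsetR H x y z ∧ v ∈ PsetR H y z x := by
  obtain ⟨hxy, hxz, hyz, nxy, nxz, nyz⟩ := htr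
  have huy : u ≠ y := by
    intro h
    subst h
    exact hv.2 hadj.symm
  have huz : u ≠ z := by
    intro h
    subst h
    exact hns ⟨⟨hyz.symm, fun h' => nyz h'.symm⟩, hv⟩
  have hvx : v ≠ x := by
    intro h
    subst h
    exact hu.2 hadj
  have hvz : v ≠ z := by
    intro h
    subst h
    exact hns2 ⟨hu, ⟨hxz.symm, fun h' => nxz h'.symm⟩⟩
  exact ⟨⟨hu.1, huy, huz, hu.2⟩, ⟨hv.1, hvz, hvx, hv.2⟩⟩

lemma Lclique {VH W : Type*} {H : SimpleGraph VH} {G : SimpleGraph W}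
    {F : Set (Sym2 VH)} {X : VH → Set W}
    (hH : Antiprismatic H)
    (hXcl : ∀ v : VH, G.IsClique (X v))
    (hXcomp : ∀ u v : VH, H.Adj u v → s(u, v) ∉ F → ∀ x ∈ X u, ∀ y ∈ X v, G.Adj x y)
    (hFne : ∀ u v : VH, s(u,v) ∈ F → ¬H.Adj u v)
    {x y z u : VH} (htr : IsTriad H x y z) (hu : u ∈ PsetR H x y z) :
    G.IsClique (LsetR H X x y z u) := by
  rw [SimpleGraph.isClique_iff]
  rintro w1 (hw1 | ⟨v1, hv1, ha1, hm1⟩) w2 (hw2 | ⟨v2, hv2, ha2, hm2⟩) hne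
  · exact hXcl u hw1 hw2 hne
  · exact hXcomp u v2 ha2 (fun hmem => hFne _ _ hmem ha2) w1 hw1 w2 hm2
  · exact (hXcomp u v1 ha1 (fun hmem => hFne _ _ hmem ha1) w2 hw2 w1 hm1).symm
  · by_cases hvv : v1 = v2
    · subst hvv
      exact hXcl v1 hm1 hm2 hne
    · have hadj : H.Adj v1 v2 :=
        crossAdj hH htr hu.1 hu.2.1 hu.2.2.1 hu.2.2.2
          hv1.1 hv1.2.2.2 hv2.1 hv2.2.2.2 hvv ha1 ha2
      exact hXcomp v1 v2 hadj (fun hmem => hFne _ _ hmem hadj) w1 hm1 w2 hm2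

end Helpers

section Core

open Finset

lemma core {VH W : Type} [Fintype W] (H : SimpleGraph VH) (F : Set (Sym2 VH))
    (G : SimpleGraph W) (X : VH → Set W)
    (hH : Antiprismatic H) (hF : IsValidPairSet F)
    (hch : ∀ u v : VH, s(u,v) ∈ F → ChangeablePair H u v)
    (hT : IsThickening H F G X)
    (a b c : VH) (htr : IsTriad H a b c)
    (k : ℕ) (hk2 : 2 ≤ k) (hke : k % 2 = 0)
    (hkbig : Fintype.card W ≤ (k-1).choose ((k-1)/2)) :
    ∃ 𝒞 : Finset (Set W), IsEdgeCliqueCover G 𝒞 ∧ 𝒞.card ≤ Fintype.card W + 3*k := by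
  classical
  obtain ⟨hXne, hXpart, hXcl, hXcomp, hXanti, hXmix⟩ := hT
  have cls_ex : ∀ w : W, ∃ v, w ∈ X v := fun w => (hXpart w).exists
  choose cls hcls using cls_ex
  have cls_uniq : ∀ (w : W) (v : VH), w ∈ X v → cls w = v := by
    intro w v hv
    obtain ⟨v', hv', huniq⟩ := hXpart w
    rw [huniq _ (hcls w), huniq _ hv]
  haveI : Finite VH := Finite.of_surjective cls (by
    intro v
    obtain ⟨w, hw⟩ := hXne v
    exact ⟨w, cls_uniq w v hw⟩)
  haveI : Fintype VH := Fintype.ofFinite VH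
  have cardVH : Fintype.card VH ≤ Fintype.card W := by
    have hinj : Function.Injective (fun v => (hXne v).choose) := by
      intro u v h
      have h' : (hXne u).choose = (hXne v).choose := h
      have h1 : (hXne u).choose ∈ X u := (hXne u).choose_spec
      have h2 : (hXne v).choose ∈ X v := (hXne v).choose_spec
      rw [h'] at h1
      exact (cls_uniq _ _ h1).symm.trans (cls_uniq _ _ h2)
    exact Fintype.card_le_of_injective _ hinj
  -- F facts
  have hFne : ∀ u v : VH, s(u,v) ∈ F → u ≠ v ∧ ¬H.Adj u v := fun u v h =>
    ⟨(hch u v h).1, (hch u v h).2.1⟩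
  have hFuniq : ∀ u p q : VH, s(u,p) ∈ F → s(u,q) ∈ F → p = q := by
    intro u p q hp hq
    have h1 : s(u,p) ∈ {e | e ∈ F ∧ u ∈ e} := ⟨hp, Sym2.mem_mk_left u p⟩
    have h2 : s(u,q) ∈ {e | e ∈ F ∧ u ∈ e} := ⟨hq, Sym2.mem_mk_left u q⟩
    have := hF.2 u h1 h2
    rw [Sym2.eq_iff] at this
    rcases this with ⟨_, h⟩ | ⟨h1', h2'⟩
    · exact h
    · exact h2'.trans h1'
  have hFswap : ∀ u v : VH, s(u,v) ∈ F → s(v,u) ∈ F := by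
    intro u v h
    rwa [Sym2.eq_swap] at h
  have hpa : ∃ pa : VH → VH, ∀ u p, s(u,p) ∈ F → pa u = p := by
    refine ⟨fun u => if h : ∃ p, s(u,p) ∈ F then h.choose else u, ?_⟩
    intro u p hp
    have hex : ∃ q, s(u,q) ∈ F := ⟨p, hp⟩
    simp only [dif_pos hex]
    exact hFuniq u hex.choose p hex.choose_spec hp
  obtain ⟨pa, hpa⟩ := hpa
  have hpaF : ∀ u, (∃ p, s(u,p) ∈ F) → s(u, pa u) ∈ F := by
    intro u ⟨p, hp⟩
    rwa [hpa u p hp]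
  have hpapa : ∀ u p, s(u,p) ∈ F → pa (pa u) = u := by
    intro u p hp
    rw [hpa u p hp]
    exact hpa p u (hFswap u p hp)
  -- class sizes
  set finX : VH → Finset W := fun u => Finset.univ.filter (· ∈ X u) with hfinX
  have hmemfinX : ∀ (w : W) (u : VH), w ∈ finX u ↔ w ∈ X u := by
    intro w u
    simp [hfinX]
  set gc : VH → ℕ := fun u => (finX u).card with hgc
  have hgc1 : ∀ u, 1 ≤ gc u := by
    intro u
    obtain ⟨w, hw⟩ := hXne u
    exact Finset.card_pos.mpr ⟨w, (hmemfinX w u).mpr hw⟩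
  have hXdisj : ∀ u v : VH, u ≠ v → Disjoint (finX u) (finX v) := by
    intro u v huv
    rw [Finset.disjoint_left]
    intro w hw1 hw2
    exact huv ((cls_uniq w u ((hmemfinX w u).mp hw1)).symm.trans (cls_uniq w v ((hmemfinX w v).mp hw2)))
  have hsumgc : ∑ u : VH, gc u = Fintype.card W := by
    have hbu : (Finset.univ : Finset W) = Finset.univ.biUnion finX := by
      apply Finset.ext
      intro w
      constructor
      · intro _
        exact Finset.mem_biUnion.mpr ⟨cls w, Finset.mem_univ _, (hmemfinX w (cls w)).mpr (hcls w)⟩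
      · intro _
        exact Finset.mem_univ w
    rw [← Finset.card_univ, hbu, Finset.card_biUnion (fun u _ v _ h => hXdisj u v h)]
  have hmix2 : ∀ u p, s(u,p) ∈ F → 2 ≤ gc u ∨ 2 ≤ gc p := by
    intro u p hup
    by_contra hcon
    push_neg at hcon
    have hu1 : gc u = 1 := le_antisymm (by omega) (hgc1 u)
    have hp1 : gc p = 1 := le_antisymm (by omega) (hgc1 p)
    obtain ⟨x0, hx0⟩ := Finset.card_eq_one.mp hu1
    obtain ⟨y0, hy0⟩ := Finset.card_eq_one.mp hp1
    obtain ⟨⟨x1, hx1, y1, hy1, hnadj⟩, ⟨x2, hx2, y2, hy2, hadj⟩⟩ := hXmix u p hup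
    have ex1 : x1 = x0 := by
      have := (hmemfinX x1 u).mpr hx1
      rw [hx0] at this
      exact Finset.mem_singleton.mp this
    have ex2 : x2 = x0 := by
      have := (hmemfinX x2 u).mpr hx2
      rw [hx0] at this
      exact Finset.mem_singleton.mp this
    have ey1 : y1 = y0 := by
      have := (hmemfinX y1 p).mpr hy1
      rw [hy0] at this
      exact Finset.mem_singleton.mp this
    have ey2 : y2 = y0 := by
      have := (hmemfinX y2 p).mpr hy2
      rw [hy0] at this
      exact Finset.mem_singleton.mp this
    rw [ex1, ey1] at hnadj
    rw [ex2, ey2] at hadj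
    exact hnadj hadj
  set eV : VH → ℕ := fun u => ((Fintype.equivFin VH) u : ℕ) with heV
  set cov : VH → Prop := fun u => (∃ p, s(u,p) ∈ F) ∧
    (gc u < gc (pa u) ∨ (gc u = gc (pa u) ∧ eV u < eV (pa u))) with hcov
  have hcov_or : ∀ u p, s(u,p) ∈ F → cov u ∨ cov p := by
    intro u p hup
    have h1 : pa u = p := hpa u p hup
    have h2 : pa p = u := hpa p u (hFswap u p hup)
    have hne' : eV u ≠ eV p := by
      intro h
      exact (hFne u p hup).1 ((Fintype.equivFin VH).injective (Fin.ext h))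
    rcases Nat.lt_trichotomy (gc u) (gc p) with h | h | h
    · exact Or.inl ⟨⟨p, hup⟩, by rw [h1]; exact Or.inl h⟩
    · rcases Nat.lt_or_ge (eV u) (eV p) with h' | h'
      · exact Or.inl ⟨⟨p, hup⟩, by rw [h1]; exact Or.inr ⟨h, h'⟩⟩
      · refine Or.inr ⟨⟨u, hFswap u p hup⟩, ?_⟩
        rw [h2]
        exact Or.inr ⟨h.symm, by omega⟩
    · exact Or.inr ⟨⟨u, hFswap u p hup⟩, by rw [h2]; exact Or.inl h⟩
  have hcov_big : ∀ u, cov u → 2 ≤ gc (pa u) := by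
    intro u ⟨hex, hcond⟩
    rcases hcond with h | ⟨h, _⟩
    · have := hgc1 u
      omega
    · rcases hmix2 u (pa u) (hpaF u hex) with h' | h'
      · omega
      · exact h'
  have hcov_not_both : ∀ u p, s(u,p) ∈ F → ¬(cov u ∧ cov p) := by
    intro u p hup ⟨⟨_, hcu⟩, ⟨_, hcp⟩⟩
    rw [hpa u p hup] at hcu
    rw [hpa p u (hFswap u p hup)] at hcp
    rcases hcu with h | ⟨h, h'⟩ <;> rcases hcp with h2 | ⟨h2, h2'⟩ <;> omega
  -- part codes
  have hcode : ∀ x : VH, ∃ S : VH → Finset (Fin k),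
      (∀ u, u ∈ Aset H x → (S u).Nonempty) ∧
      (∀ u v, u ∈ Aset H x → v ∈ Aset H x → u ≠ v → ¬H.Adj u v → Disjoint (S u) (S v)) ∧
      (∀ u v, u ∈ Aset H x → v ∈ Aset H x → u ≠ v → H.Adj u v → (S u ∩ S v).Nonempty) := by
    intro x
    have hsub : Fintype.card ↥(Aset H x) ≤ (k-1).choose ((k-1)/2) :=
      le_trans (le_trans (Fintype.card_le_of_injective _ Subtype.coe_injective) cardVH) hkbig
    obtain ⟨S0, hn0, hd0, hi0⟩ := exists_code
      (α := ↥(Aset H x)) (bad := fun u v => ¬H.Adj u.1 v.1 ∧ u ≠ v)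
      (fun u v h => ⟨fun h' => h.1 h'.symm, h.2.symm⟩)
      (fun u v h => h.2)
      (by
        rintro u v w ⟨h1, h1'⟩ ⟨h2, h2'⟩
        by_contra hvw
        exact matchA hH u.2.1 u.2.2 v.2.1 v.2.2 w.2.1 w.2.2
          (fun h => h1' (Subtype.ext h)) (fun h => h2' (Subtype.ext h))
          (fun h => hvw (Subtype.ext h)) h1 h2)
      k hk2 hke hsub
    refine ⟨fun u => if h : u ∈ Aset H x then S0 ⟨u, h⟩ else ∅, ?_, ?_, ?_⟩
    · intro u hu
      simp only [dif_pos hu]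
      exact hn0 ⟨u, hu⟩
    · intro u v hu hv huv hnadj
      simp only [dif_pos hu, dif_pos hv]
      exact hd0 ⟨u, hu⟩ ⟨v, hv⟩ ⟨hnadj, fun h => huv (congrArg Subtype.val h)⟩
    · intro u v hu hv huv hadj
      simp only [dif_pos hu, dif_pos hv]
      refine hi0 ⟨u, hu⟩ ⟨v, hv⟩ (fun h => huv (congrArg Subtype.val h)) ?_
      rintro ⟨hna, _⟩
      exact hna hadj
  obtain ⟨Sa, hSaNe, hSaD, hSaI⟩ := hcode a
  obtain ⟨Sb, hSbNe, hSbD, hSbI⟩ := hcode b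
  obtain ⟨Sc, hScNe, hScD, hScI⟩ := hcode c
  obtain ⟨hab, hac, hbc, nab, nac, nbc⟩ := htr
  have htr' : IsTriad H a b c := ⟨hab, hac, hbc, nab, nac, nbc⟩
  have hparts : ∀ u : VH, u ∈ Aset H a ∨ u ∈ Aset H b ∨ u ∈ Aset H c := by
    intro u
    by_cases hua : u = a
    · subst hua
      exact Or.inr (Or.inl ⟨hab, nab⟩)
    by_cases hub : u = b
    · subst hub
      exact Or.inl ⟨hab.symm, fun h => nab h.symm⟩
    by_cases huc : u = c
    · subst huc
      exact Or.inl ⟨hac.symm, fun h => nac h.symm⟩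
    rcases hH a b c htr' u hua hub huc with ⟨h, _, _⟩ | ⟨_, h, _⟩ | ⟨_, _, h⟩
    · exact Or.inl ⟨hua, h⟩
    · exact Or.inr (Or.inl ⟨hub, h⟩)
    · exact Or.inr (Or.inr ⟨huc, h⟩)
  have haAb : a ∈ Aset H b := ⟨hab, nab⟩
  have haAc : a ∈ Aset H c := ⟨hac, nac⟩
  have hbAa : b ∈ Aset H a := ⟨hab.symm, fun h => nab h.symm⟩
  have hcAa : c ∈ Aset H a := ⟨hac.symm, fun h => nac h.symm⟩
  have hbAc : b ∈ Aset H c := ⟨hbc, nbc⟩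
  have hcAb : c ∈ Aset H b := ⟨hbc.symm, fun h => nbc h.symm⟩
  have hPab : ∀ u, u ∈ PsetR H a b c → u ∈ PsetR H b c a → False := by
    intro u h1 h2
    exact h2.2.2.2 (two_adj hH htr' h1.1 h1.2.1 h1.2.2.1 h1.2.2.2).1
  have hPac : ∀ u, u ∈ PsetR H a b c → u ∈ PsetR H c a b → False := by
    intro u h1 h2
    exact h2.2.2.2 (two_adj hH htr' h1.1 h1.2.1 h1.2.2.1 h1.2.2.2).2
  have hPbc : ∀ u, u ∈ PsetR H b c a → u ∈ PsetR H c a b → False := by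
    intro u h1 h2
    exact h2.2.2.2 (two_adj hH htr'.rot h1.1 h1.2.1 h1.2.2.1 h1.2.2.2).1
  -- the family of cliques
  set fam1 : Finset (Set W) := (Finset.univ : Finset (Fin k)).image (CJset H X a Sa) with hfam1
  set fam2 : Finset (Set W) := (Finset.univ : Finset (Fin k)).image (CJset H X b Sb) with hfam2
  set fam3 : Finset (Set W) := (Finset.univ : Finset (Fin k)).image (CJset H X c Sc) with hfam3
  set fam4 : Finset (Set W) :=
    (Finset.univ.filter (· ∈ PsetR H a b c)).image (LsetR H X a b c) with hfam4
  set fam5 : Finset (Set W) :=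
    (Finset.univ.filter (· ∈ PsetR H b c a)).image (LsetR H X b c a) with hfam5
  set fam6 : Finset (Set W) :=
    (Finset.univ.filter (· ∈ PsetR H c a b)).image (LsetR H X c a b) with hfam6
  set fam7 : Finset (Set W) :=
    (Finset.univ.filter (fun w : W => cov (cls w))).image
      (fun w => Fset G X (pa (cls w)) w) with hfam7
  refine ⟨fam1 ∪ fam2 ∪ fam3 ∪ fam4 ∪ fam5 ∪ fam6 ∪ fam7, ⟨?_, ?_⟩, ?_⟩
  · -- all cliques
    intro C hC
    simp only [Finset.mem_union] at hC
    have hCJ : ∀ (x : VH) (S : VH → Finset (Fin k)),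
        (∀ u v, u ∈ Aset H x → v ∈ Aset H x → u ≠ v → ¬H.Adj u v → Disjoint (S u) (S v)) →
        ∀ j : Fin k, G.IsClique (CJset H X x S j) := by
      intro x S hSD j
      rw [SimpleGraph.isClique_iff]
      rintro w1 ⟨u1, hu1, hj1, hw1⟩ w2 ⟨u2, hu2, hj2, hw2⟩ hne
      by_cases huu : u1 = u2
      · subst huu
        exact hXcl u1 hw1 hw2 hne
      · have hadj : H.Adj u1 u2 := by
          by_contra hnadj
          exact Finset.disjoint_left.mp (hSD u1 u2 hu1 hu2 huu hnadj) hj1 hj2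
        exact hXcomp u1 u2 hadj (fun hmem => (hFne _ _ hmem).2 hadj) w1 hw1 w2 hw2
    rcases hC with ((((((hC | hC) | hC) | hC) | hC) | hC) | hC)
    · obtain ⟨j, _, rfl⟩ := Finset.mem_image.mp hC
      exact hCJ a Sa hSaD j
    · obtain ⟨j, _, rfl⟩ := Finset.mem_image.mp hC
      exact hCJ b Sb hSbD j
    · obtain ⟨j, _, rfl⟩ := Finset.mem_image.mp hC
      exact hCJ c Sc hScD j
    · obtain ⟨u, hu, rfl⟩ := Finset.mem_image.mp hC
      exact Lclique hH hXcl hXcomp (fun u v h => (hFne u v h).2) htr'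
        (Finset.mem_filter.mp hu).2
    · obtain ⟨u, hu, rfl⟩ := Finset.mem_image.mp hC
      exact Lclique hH hXcl hXcomp (fun u v h => (hFne u v h).2) htr'.rot
        (Finset.mem_filter.mp hu).2
    · obtain ⟨u, hu, rfl⟩ := Finset.mem_image.mp hC
      exact Lclique hH hXcl hXcomp (fun u v h => (hFne u v h).2) htr'.rot.rot
        (Finset.mem_filter.mp hu).2
    · obtain ⟨w, _, rfl⟩ := Finset.mem_image.mp hC
      rw [SimpleGraph.isClique_iff]
      rintro w1 (hw1 | ⟨ha1, hm1⟩) w2 (hw2 | ⟨ha2, hm2⟩) hne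
      · exact absurd (hw1.trans hw2.symm) hne
      · rw [Set.mem_singleton_iff] at hw1
        subst hw1
        exact ha2
      · rw [Set.mem_singleton_iff] at hw2
        subst hw2
        exact ha1.symm
      · exact hXcl _ hm1 hm2 hne
  · -- coverage
    intro w1 w2 hadj
    have hne12 : w1 ≠ w2 := hadj.ne
    set u := cls w1 with hu_def
    set v := cls w2 with hv_def
    have hw1 : w1 ∈ X u := hcls w1
    have hw2 : w2 ∈ X v := hcls w2
    have hmem7 : ∀ w w' : W, G.Adj w w' → cov (cls w) → pa (cls w) = cls w' →
        ∃ C ∈ fam1 ∪ fam2 ∪ fam3 ∪ fam4 ∪ fam5 ∪ fam6 ∪ fam7, w ∈ C ∧ w' ∈ C := by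
      intro w w' hadj' hcov' hpa'
      refine ⟨Fset G X (pa (cls w)) w, ?_, Or.inl rfl, Or.inr ⟨hadj', ?_⟩⟩
      · simp only [Finset.mem_union]
        refine Or.inr (Finset.mem_image.mpr ⟨w, Finset.mem_filter.mpr ⟨Finset.mem_univ _, hcov'⟩, rfl⟩)
      · rw [hpa']
        exact hcls w'
    have hmemCJ : ∀ (fam : Finset (Set W)) (x : VH) (S : VH → Finset (Fin k)),
        fam = (Finset.univ : Finset (Fin k)).image (CJset H X x S) →
        fam ⊆ fam1 ∪ fam2 ∪ fam3 ∪ fam4 ∪ fam5 ∪ fam6 ∪ fam7 → True := fun _ _ _ _ _ => trivial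
    by_cases huv : u = v
    · -- same class
      have hex : ∃ x S hS, (x = a ∧ S = Sa) ∨ True := ⟨a, Sa, trivial, Or.inr trivial⟩
      rcases hparts u with hA | hA | hA
      · obtain ⟨j, hj⟩ := hSaNe u hA
        refine ⟨CJset H X a Sa j, ?_, ⟨u, hA, hj, hw1⟩, ⟨u, hA, hj, by rw [huv]; exact hw2⟩⟩
        simp only [Finset.mem_union]
        exact Or.inl (Or.inl (Or.inl (Or.inl (Or.inl (Or.inl
          (Finset.mem_image.mpr ⟨j, Finset.mem_univ _, rfl⟩))))))
      · obtain ⟨j, hj⟩ := hSbNe u hA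
        refine ⟨CJset H X b Sb j, ?_, ⟨u, hA, hj, hw1⟩, ⟨u, hA, hj, by rw [huv]; exact hw2⟩⟩
        simp only [Finset.mem_union]
        exact Or.inl (Or.inl (Or.inl (Or.inl (Or.inl (Or.inr
          (Finset.mem_image.mpr ⟨j, Finset.mem_univ _, rfl⟩))))))
      · obtain ⟨j, hj⟩ := hScNe u hA
        refine ⟨CJset H X c Sc j, ?_, ⟨u, hA, hj, hw1⟩, ⟨u, hA, hj, by rw [huv]; exact hw2⟩⟩
        simp only [Finset.mem_union]
        exact Or.inl (Or.inl (Or.inl (Or.inl (Or.inr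
          (Finset.mem_image.mpr ⟨j, Finset.mem_univ _, rfl⟩)))))
    · by_cases hHadj : H.Adj u v
      · -- same part or cross part
        by_cases hsp : (u ∈ Aset H a ∧ v ∈ Aset H a) ∨ (u ∈ Aset H b ∧ v ∈ Aset H b) ∨
            (u ∈ Aset H c ∧ v ∈ Aset H c)
        · rcases hsp with ⟨hu', hv'⟩ | ⟨hu', hv'⟩ | ⟨hu', hv'⟩
          · obtain ⟨j, hj⟩ := hSaI u v hu' hv' huv hHadj
            rw [Finset.mem_inter] at hj
            refine ⟨CJset H X a Sa j, ?_, ⟨u, hu', hj.1, hw1⟩, ⟨v, hv', hj.2, hw2⟩⟩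
            simp only [Finset.mem_union]
            exact Or.inl (Or.inl (Or.inl (Or.inl (Or.inl (Or.inl
              (Finset.mem_image.mpr ⟨j, Finset.mem_univ _, rfl⟩))))))
          · obtain ⟨j, hj⟩ := hSbI u v hu' hv' huv hHadj
            rw [Finset.mem_inter] at hj
            refine ⟨CJset H X b Sb j, ?_, ⟨u, hu', hj.1, hw1⟩, ⟨v, hv', hj.2, hw2⟩⟩
            simp only [Finset.mem_union]
            exact Or.inl (Or.inl (Or.inl (Or.inl (Or.inl (Or.inr
              (Finset.mem_image.mpr ⟨j, Finset.mem_univ _, rfl⟩))))))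
          · obtain ⟨j, hj⟩ := hScI u v hu' hv' huv hHadj
            rw [Finset.mem_inter] at hj
            refine ⟨CJset H X c Sc j, ?_, ⟨u, hu', hj.1, hw1⟩, ⟨v, hv', hj.2, hw2⟩⟩
            simp only [Finset.mem_union]
            exact Or.inl (Or.inl (Or.inl (Or.inl (Or.inr
              (Finset.mem_image.mpr ⟨j, Finset.mem_univ _, rfl⟩)))))
        · push_neg at hsp
          obtain ⟨hspa, hspb, hspc⟩ := hsp
          have hLmem : ∀ (x y z u0 v0 : VH) (htr0 : IsTriad H x y z)
              (fam : Finset (Set W)),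
              fam = (Finset.univ.filter (· ∈ PsetR H x y z)).image (LsetR H X x y z) →
              u0 ∈ PsetR H x y z → v0 ∈ PsetR H y z x → H.Adj u0 v0 →
              ∀ w w' : W, w ∈ X u0 → w' ∈ X v0 →
              ∃ C ∈ fam, w ∈ C ∧ w' ∈ C := by
            intro x y z u0 v0 htr0 fam hfam hu0 hv0 hadj0 w w' hw hw'
            refine ⟨LsetR H X x y z u0, ?_, Or.inl hw, Or.inr ⟨v0, hv0, hadj0, hw'⟩⟩
            rw [hfam]
            exact Finset.mem_image.mpr ⟨u0, Finset.mem_filter.mpr ⟨Finset.mem_univ _, hu0⟩, rfl⟩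
          rcases hparts u with hu' | hu' | hu' <;> rcases hparts v with hv' | hv' | hv'
          · exact absurd hv' (hspa hu')
          · -- u ∈ Aa, v ∈ Ab
            obtain ⟨hup, hvp⟩ := offdiag htr' hu' hv' hHadj
              (fun h => hspb h.1 h.2) (fun h => hspa h.1 h.2)
            obtain ⟨C, hC, h1, h2⟩ := hLmem a b c u v htr' fam4 hfam4 hup hvp hHadj w1 w2 hw1 hw2
            refine ⟨C, ?_, h1, h2⟩
            simp only [Finset.mem_union]
            exact Or.inl (Or.inl (Or.inl (Or.inr hC)))
          · -- u ∈ Aa, v ∈ Ac : use triad (c,a,b) with roles v,u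
            obtain ⟨hvp, hup⟩ := offdiag htr'.rot.rot hv' hu' hHadj.symm
              (fun h => hspa h.2 h.1) (fun h => hspc h.2 h.1)
            obtain ⟨C, hC, h2, h1⟩ := hLmem c a b v u htr'.rot.rot fam6 hfam6 hvp hup hHadj.symm w2 w1 hw2 hw1
            refine ⟨C, ?_, h1, h2⟩
            simp only [Finset.mem_union]
            exact Or.inl (Or.inr hC)
          · -- u ∈ Ab, v ∈ Aa : triad (a,b,c) roles v,u
            obtain ⟨hvp, hup⟩ := offdiag htr' hv' hu' hHadj.symm
              (fun h => hspb h.2 h.1) (fun h => hspa h.2 h.1)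
            obtain ⟨C, hC, h2, h1⟩ := hLmem a b c v u htr' fam4 hfam4 hvp hup hHadj.symm w2 w1 hw2 hw1
            refine ⟨C, ?_, h1, h2⟩
            simp only [Finset.mem_union]
            exact Or.inl (Or.inl (Or.inl (Or.inr hC)))
          · exact absurd hv' (hspb hu')
          · -- u ∈ Ab, v ∈ Ac : triad (b,c,a)
            obtain ⟨hup, hvp⟩ := offdiag htr'.rot hu' hv' hHadj
              (fun h => hspc h.1 h.2) (fun h => hspb h.1 h.2)
            obtain ⟨C, hC, h1, h2⟩ := hLmem b c a u v htr'.rot fam5 hfam5 hup hvp hHadj w1 w2 hw1 hw2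
            refine ⟨C, ?_, h1, h2⟩
            simp only [Finset.mem_union]
            exact Or.inl (Or.inl (Or.inr hC))
          · -- u ∈ Ac, v ∈ Aa : triad (c,a,b)
            obtain ⟨hup, hvp⟩ := offdiag htr'.rot.rot hu' hv' hHadj
              (fun h => hspa h.1 h.2) (fun h => hspc h.1 h.2)
            obtain ⟨C, hC, h1, h2⟩ := hLmem c a b u v htr'.rot.rot fam6 hfam6 hup hvp hHadj w1 w2 hw1 hw2
            refine ⟨C, ?_, h1, h2⟩
            simp only [Finset.mem_union]
            exact Or.inl (Or.inr hC)
          · -- u ∈ Ac, v ∈ Ab : triad (b,c,a) roles v,u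
            obtain ⟨hvp, hup⟩ := offdiag htr'.rot hv' hu' hHadj.symm
              (fun h => hspc h.2 h.1) (fun h => hspb h.2 h.1)
            obtain ⟨C, hC, h2, h1⟩ := hLmem b c a v u htr'.rot fam5 hfam5 hvp hup hHadj.symm w2 w1 hw2 hw1
            refine ⟨C, ?_, h1, h2⟩
            simp only [Finset.mem_union]
            exact Or.inl (Or.inl (Or.inr hC))
          · exact absurd hv' (hspc hu')
      · -- F pair
        have hmemF : s(u,v) ∈ F := by
          by_contra hnF
          exact hXanti u v huv hHadj hnF w1 hw1 w2 hw2 hadj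
        rcases hcov_or u v hmemF with hcv | hcv
        · exact hmem7 w1 w2 hadj hcv (by rw [← hu_def, ← hv_def]; exact hpa u v hmemF)
        · obtain ⟨C, hC, h2, h1⟩ := hmem7 w2 w1 hadj.symm hcv
            (by rw [← hv_def, ← hu_def]; exact hpa v u (hFswap u v hmemF))
          exact ⟨C, hC, h1, h2⟩
  · -- cardinality
    have hc1 : fam1.card ≤ k := by
      refine le_trans Finset.card_image_le ?_
      simp
    have hc2 : fam2.card ≤ k := by
      refine le_trans Finset.card_image_le ?_
      simp
    have hc3 : fam3.card ≤ k := by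
      refine le_trans Finset.card_image_le ?_
      simp
    have hc4 : fam4.card ≤ (Finset.univ.filter (· ∈ PsetR H a b c)).card :=
      Finset.card_image_le
    have hc5 : fam5.card ≤ (Finset.univ.filter (· ∈ PsetR H b c a)).card :=
      Finset.card_image_le
    have hc6 : fam6.card ≤ (Finset.univ.filter (· ∈ PsetR H c a b)).card :=
      Finset.card_image_le
    have hc7 : fam7.card ≤ (Finset.univ.filter (fun w : W => cov (cls w))).card :=
      Finset.card_image_le
    have key1 : (Finset.univ.filter (fun w : W => cov (cls w))).card
        = ∑ u ∈ Finset.univ.filter cov, gc u := by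
      have heq : Finset.univ.filter (fun w : W => cov (cls w))
          = (Finset.univ.filter cov).biUnion finX := by
        apply Finset.ext
        intro w
        simp only [Finset.mem_filter, Finset.mem_univ, true_and, Finset.mem_biUnion]
        constructor
        · intro h
          exact ⟨cls w, h, (hmemfinX w (cls w)).mpr (hcls w)⟩
        · rintro ⟨u0, hu0, hw⟩
          rw [cls_uniq w u0 ((hmemfinX w u0).mp hw)]
          exact hu0
      rw [heq, Finset.card_biUnion (fun u _ v _ h => hXdisj u v h)]
    have key2 : ∑ u ∈ Finset.univ.filter cov, gc u
        ≤ ∑ u ∈ Finset.univ.filter (fun u => ∃ p, s(u,p) ∈ F), (gc u - 1) := by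
      have hsplit : Finset.univ.filter (fun u : VH => ∃ p, s(u,p) ∈ F)
          = Finset.univ.filter cov ∪
            Finset.univ.filter (fun u => (∃ p, s(u,p) ∈ F) ∧ ¬ cov u) := by
        apply Finset.ext
        intro u0
        simp only [Finset.mem_filter, Finset.mem_union, Finset.mem_univ, true_and]
        constructor
        · intro h
          by_cases hcu : cov u0
          · exact Or.inl hcu
          · exact Or.inr ⟨h, hcu⟩
        · rintro (hcu | ⟨h, _⟩)
          · exact hcu.1
          · exact h
      have hdisj2 : Disjoint (Finset.univ.filter cov)
          (Finset.univ.filter (fun u : VH => (∃ p, s(u,p) ∈ F) ∧ ¬ cov u)) := by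
        rw [Finset.disjoint_left]
        intro u0 h1 h2
        exact (Finset.mem_filter.mp h2).2.2 (Finset.mem_filter.mp h1).2
      have hcard_eq : (Finset.univ.filter (fun u : VH => (∃ p, s(u,p) ∈ F) ∧ ¬ cov u)).card
          = (Finset.univ.filter cov).card := by
        apply Finset.card_bij (fun u0 _ => pa u0)
        · intro u0 hu0
          obtain ⟨hex, hnc⟩ := (Finset.mem_filter.mp hu0).2
          refine Finset.mem_filter.mpr ⟨Finset.mem_univ _, ?_⟩
          rcases hcov_or u0 (pa u0) (hpaF u0 hex) with h | h
          · exact absurd h hnc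
          · exact h
        · intro u1 hu1 u2 hu2 heq
          obtain ⟨hex1, _⟩ := (Finset.mem_filter.mp hu1).2
          obtain ⟨hex2, _⟩ := (Finset.mem_filter.mp hu2).2
          have e1 : pa (pa u1) = u1 := hpapa u1 (pa u1) (hpaF u1 hex1)
          have e2 : pa (pa u2) = u2 := hpapa u2 (pa u2) (hpaF u2 hex2)
          rw [← e1, ← e2, heq]
        · intro v0 hv0
          have hcv : cov v0 := (Finset.mem_filter.mp hv0).2
          have hex : ∃ p, s(v0,p) ∈ F := hcv.1
          refine ⟨pa v0, Finset.mem_filter.mpr ⟨Finset.mem_univ _, ⟨⟨v0, hFswap v0 (pa v0) (hpaF v0 hex)⟩, ?_⟩⟩, hpapa v0 (pa v0) (hpaF v0 hex)⟩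
          intro hcp
          exact hcov_not_both v0 (pa v0) (hpaF v0 hex) ⟨hcv, hcp⟩
      have hstep : (Finset.univ.filter cov).card
          ≤ ∑ u0 ∈ Finset.univ.filter (fun u : VH => (∃ p, s(u,p) ∈ F) ∧ ¬ cov u), (gc u0 - 1) := by
        rw [← hcard_eq, Finset.card_eq_sum_ones]
        apply Finset.sum_le_sum
        intro u0 hu0
        obtain ⟨hex, hnc⟩ := (Finset.mem_filter.mp hu0).2
        have hcp : cov (pa u0) := by
          rcases hcov_or u0 (pa u0) (hpaF u0 hex) with h | h
          · exact absurd h hnc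
          · exact h
        have := hcov_big (pa u0) hcp
        rw [hpapa u0 (pa u0) (hpaF u0 hex)] at this
        omega
      calc ∑ u0 ∈ Finset.univ.filter cov, gc u0
          = ∑ u0 ∈ Finset.univ.filter cov, ((gc u0 - 1) + 1) :=
            Finset.sum_congr rfl (fun u0 _ => by have := hgc1 u0; omega)
        _ = (∑ u0 ∈ Finset.univ.filter cov, (gc u0 - 1)) + (Finset.univ.filter cov).card := by
            rw [Finset.sum_add_distrib, Finset.sum_const, smul_eq_mul, mul_one]
        _ ≤ (∑ u0 ∈ Finset.univ.filter cov, (gc u0 - 1)) +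
            ∑ u0 ∈ Finset.univ.filter (fun u : VH => (∃ p, s(u,p) ∈ F) ∧ ¬ cov u), (gc u0 - 1) :=
            Nat.add_le_add_left hstep _
        _ = ∑ u0 ∈ Finset.univ.filter (fun u : VH => ∃ p, s(u,p) ∈ F), (gc u0 - 1) := by
            rw [hsplit, Finset.sum_union hdisj2]
    have key3 : (Finset.univ.filter (· ∈ PsetR H a b c)).card
        + (Finset.univ.filter (· ∈ PsetR H b c a)).card
        + (Finset.univ.filter (· ∈ PsetR H c a b)).card
        + ∑ u ∈ Finset.univ.filter (fun u : VH => ∃ p, s(u,p) ∈ F), (gc u - 1)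
        ≤ Fintype.card W := by
      rw [← hsumgc]
      rw [Finset.card_filter, Finset.card_filter, Finset.card_filter, Finset.sum_filter]
      rw [← Finset.sum_add_distrib, ← Finset.sum_add_distrib, ← Finset.sum_add_distrib]
      apply Finset.sum_le_sum
      intro u0 _
      have hg1 := hgc1 u0
      by_cases h1 : u0 ∈ PsetR H a b c <;> by_cases h2 : u0 ∈ PsetR H b c a <;>
        by_cases h3 : u0 ∈ PsetR H c a b <;>
        [skip; skip; skip; skip; skip; skip; skip; skip] <;>
        first
        | (exact absurd (hPab u0 h1 h2) not_false)
        | (exact absurd (hPac u0 h1 h3) not_false)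
        | (exact absurd (hPbc u0 h2 h3) not_false)
        | (by_cases hf : ∃ p, s(u0,p) ∈ F <;>
            simp only [if_pos, if_neg, h1, h2, h3, hf, if_true, if_false] <;> omega)
    calc (fam1 ∪ fam2 ∪ fam3 ∪ fam4 ∪ fam5 ∪ fam6 ∪ fam7).card
        ≤ fam1.card + fam2.card + fam3.card + fam4.card + fam5.card + fam6.card + fam7.card := by
          refine le_trans (Finset.card_union_le _ _) ?_
          refine Nat.add_le_add ?_ le_rfl
          refine le_trans (Finset.card_union_le _ _) ?_
          refine Nat.add_le_add ?_ le_rfl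
          refine le_trans (Finset.card_union_le _ _) ?_
          refine Nat.add_le_add ?_ le_rfl
          refine le_trans (Finset.card_union_le _ _) ?_
          refine Nat.add_le_add ?_ le_rfl
          refine le_trans (Finset.card_union_le _ _) ?_
          refine Nat.add_le_add ?_ le_rfl
          exact Finset.card_union_le _ _
      _ ≤ Fintype.card W + 3*k := by
          have h7 : fam7.card ≤ ∑ u ∈ Finset.univ.filter (fun u : VH => ∃ p, s(u,p) ∈ F), (gc u - 1) :=
            le_trans hc7 (le_trans (le_of_eq key1) key2)
          omega

end Core

lemma main_bound {W : Type} [Fintype W] (G : SimpleGraph W) (hfz : FuzzyAntiprismatic G)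
    (htd : ∃ x y z : W, IsTriad G x y z) (k : ℕ) (hk2 : 2 ≤ k) (hke : k % 2 = 0)
    (hkbig : Fintype.card W ≤ (k-1).choose ((k-1)/2)) :
    edgeCliqueCoverNumber G ≤ Fintype.card W + 3*k := by
  classical
  obtain ⟨VH, H, F, X, hH, hF, hch, hT⟩ := hfz
  obtain ⟨x, y, z, hxyz⟩ := htd
  obtain ⟨hxy, hxz, hyz, nxy, nxz, nyz⟩ := hxyz
  have hcls : ∀ w : W, ∃ v : VH, w ∈ X v := fun w => (hT.partition w).exists
  choose cls hclsm using hcls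
  have hHtriad : ∀ w1 w2 : W, w1 ≠ w2 → ¬ G.Adj w1 w2 →
      cls w1 ≠ cls w2 ∧ ¬ H.Adj (cls w1) (cls w2) := by
    intro w1 w2 hne hnadj
    have hne' : cls w1 ≠ cls w2 := by
      intro h
      exact hnadj (hT.clique (cls w1) (hclsm w1) (h ▸ hclsm w2) hne)
    refine ⟨hne', ?_⟩
    by_cases hFm : s(cls w1, cls w2) ∈ F
    · exact (hch _ _ hFm).2.1
    · intro hadj
      exact hnadj (hT.complete_of_adj _ _ hadj hFm w1 (hclsm w1) w2 (hclsm w2))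
  obtain ⟨hab, nab⟩ := hHtriad x y hxy nxy
  obtain ⟨hac, nac⟩ := hHtriad x z hxz nxz
  obtain ⟨hbc, nbc⟩ := hHtriad y z hyz nyz
  have htrH : IsTriad H (cls x) (cls y) (cls z) := ⟨hab, hac, hbc, nab, nac, nbc⟩
  obtain ⟨𝒞, hcov, hcard⟩ := core H F G X hH hF hch hT (cls x) (cls y) (cls z) htrH k hk2 hke hkbig
  exact le_trans (Nat.sInf_le ⟨𝒞, hcov, rfl⟩) hcard

lemma self_fuzzy {W : Type} (G : SimpleGraph W) (h : Antiprismatic G) :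
    FuzzyAntiprismatic G := by
  refine ⟨W, G, ∅, fun v => {v}, h, ⟨fun e he => absurd he (Set.notMem_empty e), ?_⟩,
    fun u v hm => absurd hm (Set.notMem_empty _), ?_⟩
  · intro v e he e' he'
    exact absurd he.1 (Set.notMem_empty _)
  · constructor
    · exact fun v => ⟨v, rfl⟩
    · intro w
      exact ⟨w, rfl, fun y hy => hy.symm⟩
    · intro v
      rw [SimpleGraph.isClique_iff]
      intro u hu v' hv' hne
      rw [Set.mem_singleton_iff] at hu hv'
      exact absurd (hu.trans hv'.symm) hne
    · intro u v hadj _ x hx y hy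
      rw [Set.mem_singleton_iff] at hx hy
      rw [hx, hy]
      exact hadj
    · intro u v _ hnadj _ x hx y hy
      rw [Set.mem_singleton_iff] at hx hy
      rw [hx, hy]
      exact hnadj
    · intro u v hm
      exact absurd hm (Set.notMem_empty _)

/-- If `G` is a connected fuzzy antiprismatic graph on `n` vertices containing a triad, then
`cc(G) ≤ n + 3(1 + o(1)) log n`; more precisely, the same holds for any antiprismatic graph
containing a triad (here `o(1)` is as `n → ∞`, and `log` is the base-2 logarithm). -/
theorem stmt_12 : ∀ ε : ℝ, 0 < ε → ∃ N : ℕ,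
    ∀ (W : Type) [Fintype W] (G : SimpleGraph W),
      (∃ x y z : W, IsTriad G x y z) → N ≤ Fintype.card W →
      ((Antiprismatic G →
          (edgeCliqueCoverNumber G : ℝ) ≤
            (Fintype.card W : ℝ) + 3 * (1 + ε) * Real.logb 2 (Fintype.card W)) ∧
       (G.Connected → FuzzyAntiprismatic G →
          (edgeCliqueCoverNumber G : ℝ) ≤
            (Fintype.card W : ℝ) + 3 * (1 + ε) * Real.logb 2 (Fintype.card W))) := by
  intro ε hε
  obtain ⟨N, hN⟩ := arith ε hε
  refine ⟨N, ?_⟩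
  intro W _ G htd hcard
  have key : FuzzyAntiprismatic G →
      (edgeCliqueCoverNumber G : ℝ) ≤
        (Fintype.card W : ℝ) + 3 * (1 + ε) * Real.logb 2 (Fintype.card W) := by
    intro hfz
    obtain ⟨k, hk2, hke, hkb, hkr⟩ := hN (Fintype.card W) hcard
    have h1 := main_bound G hfz htd k hk2 hke hkb
    have h2 : (edgeCliqueCoverNumber G : ℝ) ≤ (Fintype.card W : ℝ) + 3*(k:ℝ) := by
      exact_mod_cast h1
    have h3 : 3*(k:ℝ) ≤ 3 * (1 + ε) * Real.logb 2 (Fintype.card W) := by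
      rw [mul_assoc]
      linarith
    linarith
  exact ⟨fun h => key (self_fuzzy G h), fun _ h => key h⟩
end

section
/- Let G be the complement of a ring of five on n vertices. Then cc(G) ≤ n−2. -/
open SimpleGraph

/-- `G` is the complement of a ring of five, with `W = {a_1,…,a_5,b_1,…,b_5}` and cliques
`V_0, V_1, …, V_5` (subscripts of `a`, `b`, `Vs` read modulo 5): each `{a_i, b_{i+1}, a_{i+2}}`
is a triangle; `{b_1,…,b_5}` is a clique; `V_0` is anticomplete to the `b`'s, complete to the
`a`'s and to every `V_i`; each `V_i` is a clique, anticomplete to `{a_{i−1}, b_i, a_{i+1}}`,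
complete to the rest of `W` and complete to `V_{i+2}`; adjacency between `V_i` and `V_{i+1}`
is arbitrary, and all remaining pairs are nonadjacent. -/
structure IsRingOfFiveComplement {V : Type*} (G : SimpleGraph V)
    (a b : ZMod 5 → V) (V0 : Set V) (Vs : ZMod 5 → Set V) : Prop where
  a_inj : Function.Injective a
  b_inj : Function.Injective b
  ab_ne : ∀ i j : ZMod 5, a i ≠ b j
  a_notmem_V0 : ∀ i : ZMod 5, a i ∉ V0
  b_notmem_V0 : ∀ i : ZMod 5, b i ∉ V0
  a_notmem_Vs : ∀ i j : ZMod 5, a i ∉ Vs j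
  b_notmem_Vs : ∀ i j : ZMod 5, b i ∉ Vs j
  V0_Vs_disj : ∀ j : ZMod 5, Disjoint V0 (Vs j)
  Vs_disj : ∀ i j : ZMod 5, i ≠ j → Disjoint (Vs i) (Vs j)
  cover : Set.range a ∪ Set.range b ∪ V0 ∪ (⋃ i : ZMod 5, Vs i) = Set.univ
  tri_ab : ∀ i : ZMod 5, G.Adj (a i) (b (i + 1))
  tri_aa : ∀ i : ZMod 5, G.Adj (a i) (a (i + 2))
  tri_ba : ∀ i : ZMod 5, G.Adj (b (i + 1)) (a (i + 2))
  b_clique : ∀ i j : ZMod 5, i ≠ j → G.Adj (b i) (b j)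
  aa_non : ∀ i : ZMod 5, ¬ G.Adj (a i) (a (i + 1))
  ab_non : ∀ i j : ZMod 5, j ≠ i + 1 → j ≠ i - 1 → ¬ G.Adj (a i) (b j)
  V0_clique : G.IsClique V0
  V0_b_anti : ∀ v ∈ V0, ∀ i : ZMod 5, ¬ G.Adj v (b i)
  V0_a_compl : ∀ v ∈ V0, ∀ i : ZMod 5, G.Adj v (a i)
  V0_Vs_compl : ∀ v ∈ V0, ∀ i : ZMod 5, ∀ u ∈ Vs i, G.Adj v u
  Vs_clique : ∀ i : ZMod 5, G.IsClique (Vs i)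
  Vs_anti : ∀ i : ZMod 5, ∀ u ∈ Vs i,
    ¬ G.Adj u (a (i - 1)) ∧ ¬ G.Adj u (b i) ∧ ¬ G.Adj u (a (i + 1))
  Vs_a_compl : ∀ i : ZMod 5, ∀ u ∈ Vs i, ∀ j : ZMod 5, j ≠ i - 1 → j ≠ i + 1 → G.Adj u (a j)
  Vs_b_compl : ∀ i : ZMod 5, ∀ u ∈ Vs i, ∀ j : ZMod 5, j ≠ i → G.Adj u (b j)
  Vs_two_compl : ∀ i : ZMod 5, ∀ u ∈ Vs i, ∀ w ∈ Vs (i + 2), G.Adj u w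

section Aux
variable {V : Type*}

def CsFun (a b : ZMod 5 → V) (Vs : ZMod 5 → Set V) (i : ZMod 5) : Set V :=
  {a i, b (i + 1), a (i + 2)} ∪ Vs i ∪ Vs (i + 2)

def QsFun (a : ZMod 5 → V) (V0 : Set V) (Vs : ZMod 5 → Set V) (i : ZMod 5) : Set V :=
  ({a i, a (i + 2)} : Set V) ∪ V0 ∪ Vs i ∪ Vs (i + 2)

open Classical in
noncomputable def AsFun (G : SimpleGraph V) (b : ZMod 5 → V) (Vs : ZMod 5 → Set V) (u : V) :
    Set V :=
  if hu : ∃ i, u ∈ Vs i then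
    {u, b (hu.choose + 2), b (hu.choose + 3)} ∪ {w | w ∈ Vs (hu.choose + 1) ∧ G.Adj u w}
  else ∅

theorem AsFun_eq (G : SimpleGraph V) (b : ZMod 5 → V) (Vs : ZMod 5 → Set V)
    (hd : ∀ i j : ZMod 5, i ≠ j → Disjoint (Vs i) (Vs j)) {u : V} {k : ZMod 5}
    (hk : u ∈ Vs k) :
    AsFun G b Vs u = {u, b (k + 2), b (k + 3)} ∪ {w | w ∈ Vs (k + 1) ∧ G.Adj u w} := by
  have hu : ∃ i, u ∈ Vs i := ⟨k, hk⟩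
  have hc : hu.choose = k := by
    by_contra hne
    exact Set.disjoint_left.mp (hd _ _ hne) hu.choose_spec hk
  rw [AsFun, dif_pos hu, hc]

end Aux

/-- If `G` is the complement of a ring of five on `n` vertices, then `cc(G) ≤ n − 2`. -/
theorem stmt_14 {V : Type*} [Fintype V] (G : SimpleGraph V)
    (a b : ZMod 5 → V) (V0 : Set V) (Vs : ZMod 5 → Set V)
    (h : IsRingOfFiveComplement G a b V0 Vs) :
    edgeCliqueCoverNumber G ≤ Fintype.card V - 2 := by
  classical
  -- basic adjacency helpers
  have hadj_ab : ∀ i : ZMod 5, G.Adj (a i) (b (i + 1)) := h.tri_ab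
  have hadj_ab' : ∀ i : ZMod 5, G.Adj (a i) (b (i - 1)) := by
    intro i
    have := (h.tri_ba (i - 2)).symm
    have e1 : i - 2 + 2 = i := by ring
    have e2 : i - 2 + 1 = i - 1 := by ring
    rwa [e1, e2] at this
  have hadj_aVs : ∀ (i k : ZMod 5), k ≠ i + 1 → k ≠ i - 1 → ∀ u ∈ Vs k, G.Adj (a i) u := by
    intro i k h1 h2 u hu
    refine (h.Vs_a_compl k u hu i ?_ ?_).symm
    · intro hh; exact h1 (by rw [hh]; ring)
    · intro hh; exact h2 (by rw [hh]; ring)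
  have hadj_bVs : ∀ (j k : ZMod 5), j ≠ k → ∀ u ∈ Vs k, G.Adj (b j) u :=
    fun j k hj u hu => (h.Vs_b_compl k u hu j hj).symm
  -- the cliques
  have LC : ∀ i : ZMod 5, G.IsClique (CsFun a b Vs i) := by
    intro i x hx y hy hxy
    have e4 : ∀ u ∈ Vs i, G.Adj (a i) u :=
      hadj_aVs i i ((by decide : ∀ i : ZMod 5, i ≠ i + 1) i)
        ((by decide : ∀ i : ZMod 5, i ≠ i - 1) i)
    have e5 : ∀ u ∈ Vs (i + 2), G.Adj (a i) u :=
      hadj_aVs i (i + 2) ((by decide : ∀ i : ZMod 5, i + 2 ≠ i + 1) i)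
        ((by decide : ∀ i : ZMod 5, i + 2 ≠ i - 1) i)
    have e6 : ∀ u ∈ Vs i, G.Adj (b (i + 1)) u :=
      hadj_bVs (i + 1) i ((by decide : ∀ i : ZMod 5, i + 1 ≠ i) i)
    have e7 : ∀ u ∈ Vs (i + 2), G.Adj (b (i + 1)) u :=
      hadj_bVs (i + 1) (i + 2) ((by decide : ∀ i : ZMod 5, i + 1 ≠ i + 2) i)
    have e8 : ∀ u ∈ Vs i, G.Adj (a (i + 2)) u :=
      hadj_aVs (i + 2) i ((by decide : ∀ i : ZMod 5, i ≠ i + 2 + 1) i)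
        ((by decide : ∀ i : ZMod 5, i ≠ i + 2 - 1) i)
    have e9 : ∀ u ∈ Vs (i + 2), G.Adj (a (i + 2)) u :=
      hadj_aVs (i + 2) (i + 2) ((by decide : ∀ i : ZMod 5, i + 2 ≠ i + 2 + 1) i)
        ((by decide : ∀ i : ZMod 5, i + 2 ≠ i + 2 - 1) i)
    have hx' : x = a i ∨ x = b (i + 1) ∨ x = a (i + 2) ∨ x ∈ Vs i ∨ x ∈ Vs (i + 2) := by
      simpa [CsFun, or_assoc] using hx
    have hy' : y = a i ∨ y = b (i + 1) ∨ y = a (i + 2) ∨ y ∈ Vs i ∨ y ∈ Vs (i + 2) := by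
      simpa [CsFun, or_assoc] using hy
    rcases hx' with rfl | rfl | rfl | hx' | hx' <;>
      rcases hy' with rfl | rfl | rfl | hy' | hy' <;>
      first
      | exact absurd rfl hxy
      | exact hadj_ab i
      | exact (hadj_ab i).symm
      | exact h.tri_aa i
      | exact (h.tri_aa i).symm
      | exact h.tri_ba i
      | exact (h.tri_ba i).symm
      | exact e4 _ hy'
      | exact (e4 _ hx').symm
      | exact e5 _ hy'
      | exact (e5 _ hx').symm
      | exact e6 _ hy'
      | exact (e6 _ hx').symm
      | exact e7 _ hy'
      | exact (e7 _ hx').symm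
      | exact e8 _ hy'
      | exact (e8 _ hx').symm
      | exact e9 _ hy'
      | exact (e9 _ hx').symm
      | exact h.Vs_clique i hx' hy' hxy
      | exact h.Vs_clique (i + 2) hx' hy' hxy
      | exact h.Vs_two_compl i x hx' y hy'
      | exact (h.Vs_two_compl i y hy' x hx').symm
  have LQ : ∀ i : ZMod 5, G.IsClique (QsFun a V0 Vs i) := by
    intro i x hx y hy hxy
    have e4 : ∀ u ∈ Vs i, G.Adj (a i) u :=
      hadj_aVs i i ((by decide : ∀ i : ZMod 5, i ≠ i + 1) i)
        ((by decide : ∀ i : ZMod 5, i ≠ i - 1) i)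
    have e5 : ∀ u ∈ Vs (i + 2), G.Adj (a i) u :=
      hadj_aVs i (i + 2) ((by decide : ∀ i : ZMod 5, i + 2 ≠ i + 1) i)
        ((by decide : ∀ i : ZMod 5, i + 2 ≠ i - 1) i)
    have e8 : ∀ u ∈ Vs i, G.Adj (a (i + 2)) u :=
      hadj_aVs (i + 2) i ((by decide : ∀ i : ZMod 5, i ≠ i + 2 + 1) i)
        ((by decide : ∀ i : ZMod 5, i ≠ i + 2 - 1) i)
    have e9 : ∀ u ∈ Vs (i + 2), G.Adj (a (i + 2)) u :=
      hadj_aVs (i + 2) (i + 2) ((by decide : ∀ i : ZMod 5, i + 2 ≠ i + 2 + 1) i)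
        ((by decide : ∀ i : ZMod 5, i + 2 ≠ i + 2 - 1) i)
    have hx' : x = a i ∨ x = a (i + 2) ∨ x ∈ V0 ∨ x ∈ Vs i ∨ x ∈ Vs (i + 2) := by
      simpa [QsFun, or_assoc] using hx
    have hy' : y = a i ∨ y = a (i + 2) ∨ y ∈ V0 ∨ y ∈ Vs i ∨ y ∈ Vs (i + 2) := by
      simpa [QsFun, or_assoc] using hy
    rcases hx' with rfl | rfl | hx' | hx' | hx' <;>
      rcases hy' with rfl | rfl | hy' | hy' | hy' <;>
      first
      | exact absurd rfl hxy
      | exact h.tri_aa i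
      | exact (h.tri_aa i).symm
      | exact e4 _ hy'
      | exact (e4 _ hx').symm
      | exact e5 _ hy'
      | exact (e5 _ hx').symm
      | exact e8 _ hy'
      | exact (e8 _ hx').symm
      | exact e9 _ hy'
      | exact (e9 _ hx').symm
      | exact h.V0_clique hx' hy' hxy
      | exact h.V0_a_compl _ hx' _
      | exact (h.V0_a_compl _ hy' _).symm
      | exact h.V0_Vs_compl _ hx' _ _ hy'
      | exact (h.V0_Vs_compl _ hy' _ _ hx').symm
      | exact h.Vs_clique i hx' hy' hxy
      | exact h.Vs_clique (i + 2) hx' hy' hxy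
      | exact h.Vs_two_compl i x hx' y hy'
      | exact (h.Vs_two_compl i y hy' x hx').symm
  have LB : G.IsClique (Set.range b) := by
    rintro x ⟨i, rfl⟩ y ⟨j, rfl⟩ hxy
    exact h.b_clique i j (fun e => hxy (by rw [e]))
  have LA : ∀ (u : V) (k : ZMod 5), u ∈ Vs k → G.IsClique (AsFun G b Vs u) := by
    intro u k hk
    rw [AsFun_eq G b Vs h.Vs_disj hk]
    intro x hx y hy hxy
    have f1 : G.Adj u (b (k + 2)) :=
      h.Vs_b_compl k u hk (k + 2) ((by decide : ∀ k : ZMod 5, k + 2 ≠ k) k)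
    have f2 : G.Adj u (b (k + 3)) :=
      h.Vs_b_compl k u hk (k + 3) ((by decide : ∀ k : ZMod 5, k + 3 ≠ k) k)
    have f3 : G.Adj (b (k + 2)) (b (k + 3)) :=
      h.b_clique _ _ ((by decide : ∀ k : ZMod 5, k + 2 ≠ k + 3) k)
    have f5 : ∀ w, w ∈ Vs (k + 1) ∧ G.Adj u w → G.Adj (b (k + 2)) w :=
      fun w hw => hadj_bVs (k + 2) (k + 1)
        ((by decide : ∀ k : ZMod 5, k + 2 ≠ k + 1) k) w hw.1
    have f6 : ∀ w, w ∈ Vs (k + 1) ∧ G.Adj u w → G.Adj (b (k + 3)) w :=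
      fun w hw => hadj_bVs (k + 3) (k + 1)
        ((by decide : ∀ k : ZMod 5, k + 3 ≠ k + 1) k) w hw.1
    have hx' : x = u ∨ x = b (k + 2) ∨ x = b (k + 3) ∨ (x ∈ Vs (k + 1) ∧ G.Adj u x) := by
      simpa [or_assoc] using hx
    have hy' : y = u ∨ y = b (k + 2) ∨ y = b (k + 3) ∨ (y ∈ Vs (k + 1) ∧ G.Adj u y) := by
      simpa [or_assoc] using hy
    rcases hx' with rfl | rfl | rfl | hx' <;>
      rcases hy' with rfl | rfl | rfl | hy' <;>
      first
      | exact absurd rfl hxy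
      | exact f1
      | exact f1.symm
      | exact f2
      | exact f2.symm
      | exact f3
      | exact f3.symm
      | exact hy'.2
      | exact hx'.2.symm
      | exact f5 _ hy'
      | exact (f5 _ hx').symm
      | exact f6 _ hy'
      | exact (f6 _ hx').symm
      | exact h.Vs_clique (k + 1) hx'.1 hy'.1 hxy
  -- the family of cliques
  set F : Finset V := (Set.toFinite (⋃ i : ZMod 5, Vs i)).toFinset with hF
  set 𝒞 : Finset (Set V) :=
    ((Finset.univ.image (CsFun a b Vs) ∪ {Set.range b}) ∪ F.image (AsFun G b Vs)) ∪
      (if V0 = ∅ then (∅ : Finset (Set V))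
        else ({0, 1, 2} : Finset (ZMod 5)).image (QsFun a V0 Vs)) with h𝒞
  have hCmem : ∀ i : ZMod 5, CsFun a b Vs i ∈ 𝒞 := by
    intro i
    refine Finset.mem_union_left _ (Finset.mem_union_left _ (Finset.mem_union_left _ ?_))
    exact Finset.mem_image_of_mem _ (Finset.mem_univ i)
  have hBmem : Set.range b ∈ 𝒞 := by
    refine Finset.mem_union_left _ (Finset.mem_union_left _ (Finset.mem_union_right _ ?_))
    simp
  have hAmem : ∀ (u : V) (k : ZMod 5), u ∈ Vs k → AsFun G b Vs u ∈ 𝒞 := by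
    intro u k hk
    refine Finset.mem_union_left _ (Finset.mem_union_right _ ?_)
    refine Finset.mem_image_of_mem _ ?_
    simp only [hF, Set.Finite.mem_toFinset, Set.mem_iUnion]
    exact ⟨k, hk⟩
  have hQmem : V0 ≠ ∅ → ∀ i : ZMod 5, i = 0 ∨ i = 1 ∨ i = 2 → QsFun a V0 Vs i ∈ 𝒞 := by
    intro hne i hi
    refine Finset.mem_union_right _ ?_
    rw [if_neg hne]
    refine Finset.mem_image_of_mem _ ?_
    simp only [Finset.mem_insert, Finset.mem_singleton]
    exact hi
  -- memberships into the clique sets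
  have maC1 : ∀ i : ZMod 5, a i ∈ CsFun a b Vs i := by intro i; simp [CsFun]
  have maC2 : ∀ i : ZMod 5, a (i + 2) ∈ CsFun a b Vs i := by intro i; simp [CsFun]
  have mbC : ∀ i : ZMod 5, b (i + 1) ∈ CsFun a b Vs i := by intro i; simp [CsFun]
  have mVsC1 : ∀ i : ZMod 5, Vs i ⊆ CsFun a b Vs i := by
    intro i x hx; exact Or.inl (Or.inr hx)
  have mVsC2 : ∀ i : ZMod 5, Vs (i + 2) ⊆ CsFun a b Vs i := by
    intro i x hx; exact Or.inr hx
  have maQ1 : ∀ i : ZMod 5, a i ∈ QsFun a V0 Vs i := by intro i; simp [QsFun]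
  have maQ2 : ∀ i : ZMod 5, a (i + 2) ∈ QsFun a V0 Vs i := by intro i; simp [QsFun]
  have mV0Q : ∀ i : ZMod 5, V0 ⊆ QsFun a V0 Vs i := by
    intro i x hx; exact Or.inl (Or.inl (Or.inr hx))
  have mVsQ1 : ∀ i : ZMod 5, Vs i ⊆ QsFun a V0 Vs i := by
    intro i x hx; exact Or.inl (Or.inr hx)
  have mVsQ2 : ∀ i : ZMod 5, Vs (i + 2) ⊆ QsFun a V0 Vs i := by
    intro i x hx; exact Or.inr hx
  have mA1 : ∀ (u : V) (k : ZMod 5), u ∈ Vs k → u ∈ AsFun G b Vs u := by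
    intro u k hk; rw [AsFun_eq G b Vs h.Vs_disj hk]; simp
  have mA2 : ∀ (u : V) (k : ZMod 5), u ∈ Vs k → b (k + 2) ∈ AsFun G b Vs u := by
    intro u k hk; rw [AsFun_eq G b Vs h.Vs_disj hk]; simp
  have mA3 : ∀ (u : V) (k : ZMod 5), u ∈ Vs k → b (k + 3) ∈ AsFun G b Vs u := by
    intro u k hk; rw [AsFun_eq G b Vs h.Vs_disj hk]; simp
  have mA4 : ∀ (u : V) (k : ZMod 5), u ∈ Vs k → ∀ w, w ∈ Vs (k + 1) → G.Adj u w →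
      w ∈ AsFun G b Vs u := by
    intro u k hk w hw hadj; rw [AsFun_eq G b Vs h.Vs_disj hk]
    exact Or.inr ⟨hw, hadj⟩
  -- classification of vertices
  have memW : ∀ x : V, (∃ i, x = a i) ∨ (∃ i, x = b i) ∨ x ∈ V0 ∨ (∃ i, x ∈ Vs i) := by
    intro x
    have hx : x ∈ Set.range a ∪ Set.range b ∪ V0 ∪ ⋃ i : ZMod 5, Vs i :=
      h.cover ▸ Set.mem_univ x
    rcases hx with ((⟨i, hi⟩ | ⟨i, hi⟩) | hx) | hx
    · exact Or.inl ⟨i, hi.symm⟩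
    · exact Or.inr (Or.inl ⟨i, hi.symm⟩)
    · exact Or.inr (Or.inr (Or.inl hx))
    · exact Or.inr (Or.inr (Or.inr (Set.mem_iUnion.mp hx)))
  have hcls : ∀ i j : ZMod 5, j = i ∨ j = i + 1 ∨ j = i + 2 ∨ j = i + 3 ∨ j = i + 4 := by
    decide
  have hsel : ∀ i : ZMod 5, ∃ s : ZMod 5, (s = 0 ∨ s = 1 ∨ s = 2) ∧ (i = s ∨ i = s + 2) := by
    decide
  have r1 : ∀ i : ZMod 5, i + 3 + 2 = i := by decide
  have r2 : ∀ i : ZMod 5, i + 4 + 1 = i := by decide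
  have r3 : ∀ i : ZMod 5, i + 3 + 1 = i + 4 := by decide
  have r4 : ∀ i : ZMod 5, i + 1 - 1 = i := by decide
  -- every member is a clique
  have hcl : ∀ C ∈ 𝒞, G.IsClique C := by
    intro C hC
    rcases Finset.mem_union.mp hC with hC | hC
    · rcases Finset.mem_union.mp hC with hC | hC
      · rcases Finset.mem_union.mp hC with hC | hC
        · obtain ⟨i, -, rfl⟩ := Finset.mem_image.mp hC
          exact LC i
        · rw [Finset.mem_singleton] at hC; subst hC; exact LB
      · obtain ⟨u, hu, rfl⟩ := Finset.mem_image.mp hC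
        rw [hF, Set.Finite.mem_toFinset, Set.mem_iUnion] at hu
        obtain ⟨k, hk⟩ := hu
        exact LA u k hk
    · by_cases hV0 : V0 = ∅
      · rw [if_pos hV0] at hC; exact absurd hC (Finset.notMem_empty _)
      · rw [if_neg hV0] at hC
        obtain ⟨i, -, rfl⟩ := Finset.mem_image.mp hC
        exact LQ i
  -- every edge is covered
  have hcov2 : ∀ ⦃u v : V⦄, G.Adj u v → ∃ C ∈ 𝒞, u ∈ C ∧ v ∈ C := by
    intro u v huv
    rcases memW u with ⟨i, rfl⟩ | ⟨i, rfl⟩ | hu | ⟨i, hu⟩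
    · rcases memW v with ⟨j, rfl⟩ | ⟨j, rfl⟩ | hv | ⟨j, hv⟩
      · -- a , a
        rcases hcls i j with rfl | rfl | rfl | rfl | rfl
        · exact absurd rfl huv.ne
        · exact absurd huv (h.aa_non i)
        · exact ⟨_, hCmem i, maC1 i, maC2 i⟩
        · refine ⟨_, hCmem (i + 3), ?_, maC1 (i + 3)⟩
          have e := r1 i
          have t := maC2 (i + 3)
          rwa [e] at t
        · have e := r2 i
          exact absurd (by rw [e]; exact huv.symm) (h.aa_non (i + 4))
      · -- a , b
        rcases hcls i j with rfl | rfl | rfl | rfl | rfl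
        · exact absurd huv (h.ab_non j j ((by decide : ∀ i : ZMod 5, i ≠ i + 1) j)
            ((by decide : ∀ i : ZMod 5, i ≠ i - 1) j))
        · exact ⟨_, hCmem i, maC1 i, mbC i⟩
        · exact absurd huv (h.ab_non i (i + 2)
            ((by decide : ∀ i : ZMod 5, i + 2 ≠ i + 1) i)
            ((by decide : ∀ i : ZMod 5, i + 2 ≠ i - 1) i))
        · exact absurd huv (h.ab_non i (i + 3)
            ((by decide : ∀ i : ZMod 5, i + 3 ≠ i + 1) i)
            ((by decide : ∀ i : ZMod 5, i + 3 ≠ i - 1) i))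
        · refine ⟨_, hCmem (i + 3), ?_, ?_⟩
          · have e := r1 i
            have t := maC2 (i + 3)
            rwa [e] at t
          · have e := r3 i
            have t := mbC (i + 3)
            rwa [e] at t
      · -- a , V0
        have hne : V0 ≠ ∅ := Set.nonempty_iff_ne_empty.mp ⟨v, hv⟩
        obtain ⟨s, hs1, hs2⟩ := hsel i
        refine ⟨_, hQmem hne s hs1, ?_, mV0Q s hv⟩
        rcases hs2 with rfl | rfl
        · exact maQ1 _
        · exact maQ2 _
      · -- a , Vs
        rcases hcls i j with rfl | rfl | rfl | rfl | rfl
        · exact ⟨_, hCmem j, maC1 j, mVsC1 j hv⟩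
        · have e := r4 i
          have hn := (h.Vs_anti (i + 1) v hv).1
          rw [e] at hn
          exact absurd huv.symm hn
        · exact ⟨_, hCmem i, maC1 i, mVsC2 i hv⟩
        · refine ⟨_, hCmem (i + 3), ?_, mVsC1 (i + 3) hv⟩
          have e := r1 i
          have t := maC2 (i + 3)
          rwa [e] at t
        · have e := r2 i
          have hn := (h.Vs_anti (i + 4) v hv).2.2
          rw [e] at hn
          exact absurd huv.symm hn
    · rcases memW v with ⟨j, rfl⟩ | ⟨j, rfl⟩ | hv | ⟨j, hv⟩
      · -- b , a
        rcases hcls j i with rfl | rfl | rfl | rfl | rfl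
        · exact absurd huv.symm (h.ab_non i i ((by decide : ∀ i : ZMod 5, i ≠ i + 1) i)
            ((by decide : ∀ i : ZMod 5, i ≠ i - 1) i))
        · exact ⟨_, hCmem j, mbC j, maC1 j⟩
        · exact absurd huv.symm (h.ab_non j (j + 2)
            ((by decide : ∀ i : ZMod 5, i + 2 ≠ i + 1) j)
            ((by decide : ∀ i : ZMod 5, i + 2 ≠ i - 1) j))
        · exact absurd huv.symm (h.ab_non j (j + 3)
            ((by decide : ∀ i : ZMod 5, i + 3 ≠ i + 1) j)
            ((by decide : ∀ i : ZMod 5, i + 3 ≠ i - 1) j))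
        · refine ⟨_, hCmem (j + 3), ?_, ?_⟩
          · have e := r3 j
            have t := mbC (j + 3)
            rwa [e] at t
          · have e := r1 j
            have t := maC2 (j + 3)
            rwa [e] at t
      · -- b , b
        exact ⟨_, hBmem, ⟨i, rfl⟩, ⟨j, rfl⟩⟩
      · -- b , V0
        exact absurd huv.symm (h.V0_b_anti v hv i)
      · -- b , Vs
        rcases hcls j i with rfl | rfl | rfl | rfl | rfl
        · exact absurd huv.symm (h.Vs_anti i v hv).2.1
        · exact ⟨_, hCmem j, mbC j, mVsC1 j hv⟩
        · exact ⟨_, hAmem v j hv, mA2 v j hv, mA1 v j hv⟩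
        · exact ⟨_, hAmem v j hv, mA3 v j hv, mA1 v j hv⟩
        · refine ⟨_, hCmem (j + 3), ?_, ?_⟩
          · have e := r3 j
            have t := mbC (j + 3)
            rwa [e] at t
          · have e := r1 j
            have t := mVsC2 (j + 3)
            rw [e] at t
            exact t hv
    · -- u ∈ V0
      have hne : V0 ≠ ∅ := Set.nonempty_iff_ne_empty.mp ⟨u, hu⟩
      rcases memW v with ⟨j, rfl⟩ | ⟨j, rfl⟩ | hv | ⟨j, hv⟩
      · obtain ⟨s, hs1, hs2⟩ := hsel j
        refine ⟨_, hQmem hne s hs1, mV0Q s hu, ?_⟩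
        rcases hs2 with rfl | rfl
        · exact maQ1 _
        · exact maQ2 _
      · exact absurd huv (h.V0_b_anti u hu j)
      · exact ⟨_, hQmem hne 0 (Or.inl rfl), mV0Q 0 hu, mV0Q 0 hv⟩
      · obtain ⟨s, hs1, hs2⟩ := hsel j
        refine ⟨_, hQmem hne s hs1, mV0Q s hu, ?_⟩
        rcases hs2 with rfl | rfl
        · exact mVsQ1 _ hv
        · exact mVsQ2 _ hv
    · -- u ∈ Vs i
      rcases memW v with ⟨j, rfl⟩ | ⟨j, rfl⟩ | hv | ⟨j, hv⟩
      · -- Vs , a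
        rcases hcls j i with rfl | rfl | rfl | rfl | rfl
        · exact ⟨_, hCmem i, mVsC1 i hu, maC1 i⟩
        · have e := r4 j
          have hn := (h.Vs_anti (j + 1) u hu).1
          rw [e] at hn
          exact absurd huv hn
        · exact ⟨_, hCmem j, mVsC2 j hu, maC1 j⟩
        · refine ⟨_, hCmem (j + 3), mVsC1 (j + 3) hu, ?_⟩
          have e := r1 j
          have t := maC2 (j + 3)
          rwa [e] at t
        · have e := r2 j
          have hn := (h.Vs_anti (j + 4) u hu).2.2
          rw [e] at hn
          exact absurd huv hn
      · -- Vs , b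
        rcases hcls i j with rfl | rfl | rfl | rfl | rfl
        · exact absurd huv (h.Vs_anti j u hu).2.1
        · exact ⟨_, hCmem i, mVsC1 i hu, mbC i⟩
        · exact ⟨_, hAmem u i hu, mA1 u i hu, mA2 u i hu⟩
        · exact ⟨_, hAmem u i hu, mA1 u i hu, mA3 u i hu⟩
        · refine ⟨_, hCmem (i + 3), ?_, ?_⟩
          · have e := r1 i
            have t := mVsC2 (i + 3)
            rw [e] at t
            exact t hu
          · have e := r3 i
            have t := mbC (i + 3)
            rwa [e] at t
      · -- Vs , V0
        have hne : V0 ≠ ∅ := Set.nonempty_iff_ne_empty.mp ⟨v, hv⟩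
        obtain ⟨s, hs1, hs2⟩ := hsel i
        refine ⟨_, hQmem hne s hs1, ?_, mV0Q s hv⟩
        rcases hs2 with rfl | rfl
        · exact mVsQ1 _ hu
        · exact mVsQ2 _ hu
      · -- Vs , Vs
        rcases hcls i j with rfl | rfl | rfl | rfl | rfl
        · exact ⟨_, hCmem j, mVsC1 j hu, mVsC1 j hv⟩
        · exact ⟨_, hAmem u i hu, mA1 u i hu, mA4 u i hu v hv huv⟩
        · exact ⟨_, hCmem i, mVsC1 i hu, mVsC2 i hv⟩
        · refine ⟨_, hCmem (i + 3), ?_, mVsC1 (i + 3) hv⟩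
          have e := r1 i
          have t := mVsC2 (i + 3)
          rw [e] at t
          exact t hu
        · refine ⟨_, hAmem v (i + 4) hv, ?_, mA1 v (i + 4) hv⟩
          have e := r2 i
          exact mA4 v (i + 4) hv u (by rw [e]; exact hu) huv.symm
  have hcover : IsEdgeCliqueCover G 𝒞 := ⟨hcl, hcov2⟩
  -- cardinality bound on 𝒞
  have hcard : 𝒞.card ≤ 6 + F.card + (if V0 = ∅ then 0 else 3) := by
    rw [h𝒞]
    refine (Finset.card_union_le _ _).trans ?_
    have h12 : (Finset.univ.image (CsFun a b Vs) ∪ {Set.range b} ∪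
        F.image (AsFun G b Vs)).card ≤ 6 + F.card := by
      refine (Finset.card_union_le _ _).trans ?_
      have h1 := Finset.card_union_le (Finset.univ.image (CsFun a b Vs))
        ({Set.range b} : Finset (Set V))
      have hC5 : (Finset.univ.image (CsFun a b Vs)).card ≤ 5 := by
        refine Finset.card_image_le.trans ?_
        rw [Finset.card_univ, ZMod.card]
      have hA : (F.image (AsFun G b Vs)).card ≤ F.card := Finset.card_image_le
      simp only [Finset.card_singleton] at h1
      omega
    have h4 : (if V0 = ∅ then (∅ : Finset (Set V))
        else Finset.image (QsFun a V0 Vs) {0, 1, 2}).card ≤ (if V0 = ∅ then 0 else 3) := by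
      split
      · simp
      · refine Finset.card_image_le.trans ?_
        decide
    omega
  -- lower bound on the number of vertices
  set V0f : Finset V := (Set.toFinite V0).toFinset with hV0f
  have hdab : Disjoint (Finset.univ.image a) (Finset.univ.image b) := by
    rw [Finset.disjoint_left]
    rintro x hx hx'
    obtain ⟨i, -, rfl⟩ := Finset.mem_image.mp hx
    obtain ⟨j, -, hj⟩ := Finset.mem_image.mp hx'
    exact h.ab_ne i j hj.symm
  have hWf : (Finset.univ.image a ∪ Finset.univ.image b).card = 10 := by
    rw [Finset.card_union_of_disjoint hdab, Finset.card_image_of_injective _ h.a_inj,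
      Finset.card_image_of_injective _ h.b_inj, Finset.card_univ, ZMod.card]
  have hdWV0 : Disjoint (Finset.univ.image a ∪ Finset.univ.image b) V0f := by
    rw [Finset.disjoint_left]
    intro x hx hx'
    rw [hV0f, Set.Finite.mem_toFinset] at hx'
    rcases Finset.mem_union.mp hx with hx | hx <;>
      obtain ⟨i, -, rfl⟩ := Finset.mem_image.mp hx
    · exact h.a_notmem_V0 i hx'
    · exact h.b_notmem_V0 i hx'
  have hdWF : Disjoint (Finset.univ.image a ∪ Finset.univ.image b ∪ V0f) F := by
    rw [Finset.disjoint_left]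
    intro x hx hx'
    rw [hF, Set.Finite.mem_toFinset, Set.mem_iUnion] at hx'
    obtain ⟨k, hk⟩ := hx'
    rcases Finset.mem_union.mp hx with hx | hx
    · rcases Finset.mem_union.mp hx with hx | hx <;>
        obtain ⟨i, -, rfl⟩ := Finset.mem_image.mp hx
      · exact h.a_notmem_Vs i k hk
      · exact h.b_notmem_Vs i k hk
    · rw [hV0f, Set.Finite.mem_toFinset] at hx
      exact Set.disjoint_left.mp (h.V0_Vs_disj k) hx hk
  have htot : 10 + V0f.card + F.card ≤ Fintype.card V := by
    have h1 : (Finset.univ.image a ∪ Finset.univ.image b ∪ V0f ∪ F).card =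
        10 + V0f.card + F.card := by
      rw [Finset.card_union_of_disjoint hdWF, Finset.card_union_of_disjoint hdWV0, hWf]
    calc 10 + V0f.card + F.card
        = (Finset.univ.image a ∪ Finset.univ.image b ∪ V0f ∪ F).card := h1.symm
      _ ≤ (Finset.univ : Finset V).card := Finset.card_le_univ _
      _ = Fintype.card V := Finset.card_univ
  -- conclude
  have hnum : edgeCliqueCoverNumber G ≤ 𝒞.card := Nat.sInf_le ⟨𝒞, hcover, rfl⟩
  rcases eq_or_ne V0 ∅ with hV0 | hV0
  · have hb : 𝒞.card ≤ 6 + F.card := by simpa [hV0] using hcard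
    omega
  · have hq : 1 ≤ V0f.card := by
      obtain ⟨x, hx⟩ := Set.nonempty_iff_ne_empty.mpr hV0
      exact Finset.card_pos.mpr ⟨x, by rw [hV0f, Set.Finite.mem_toFinset]; exact hx⟩
    have hb : 𝒞.card ≤ 6 + F.card + 3 := by simpa [hV0] using hcard
    omega
end
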